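/- arXiv:2501.01221 — 16 statements merged into one kernel-verified Lean document; each statement's English description precedes it below -/
import Mathlib

section
/- Let θ:[0,1]→[0,∞] and ϑ:[0,∞]→[0,1] be continuous and decreasing functions, and suppose that the function O_{θ,ϑ}:[0,1]²→[0,1] defined by O_{θ,ϑ}(x,y)=ϑ(θ(x)+θ(y)) is an overlap function. Then: (i) for every x∈[0,1], θ(x)=∞ if and only if x=0; and (ii) for every x∈[0,∞], ϑ(x)=0 if and only if x=∞. -/
open unitInterval ENNReal Filter

/-- An overlap function on the unit interval: commutative, `O x y = 0` iff `x*y = 0`,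
`O x y = 1` iff `x*y = 1`, increasing in each variable, and continuous. -/
def IsOverlap (O : I → I → I) : Prop :=
  (∀ x y, O x y = O y x) ∧
  (∀ x y, O x y = 0 ↔ x * y = 0) ∧
  (∀ x y, O x y = 1 ↔ x * y = 1) ∧
  (∀ y, Monotone fun x => O x y) ∧
  (∀ x, Monotone fun y => O x y) ∧
  Continuous fun p : I × I => O p.1 p.2

/-- A grouping function on the unit interval: commutative, `G x y = 0` iff `x = y = 0`,
`G x y = 1` iff `x = 1` or `y = 1`, increasing in each variable, and continuous. -/
def IsGrouping (G : I → I → I) : Prop :=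
  (∀ x y, G x y = G y x) ∧
  (∀ x y, G x y = 0 ↔ x = 0 ∧ y = 0) ∧
  (∀ x y, G x y = 1 ↔ x = 1 ∨ y = 1) ∧
  (∀ y, Monotone fun x => G x y) ∧
  (∀ x, Monotone fun y => G x y) ∧
  Continuous fun p : I × I => G p.1 p.2

/-- A t-norm: commutative, associative, increasing in each variable, with 1 as neutral element. -/
def IsTNorm (T : I → I → I) : Prop :=
  (∀ x y, T x y = T y x) ∧
  (∀ x y z, T (T x y) z = T x (T y z)) ∧
  (∀ y, Monotone fun x => T x y) ∧
  (∀ x, Monotone fun y => T x y) ∧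
  (∀ x, T x 1 = x)

/-- A t-conorm: commutative, associative, increasing in each variable, with 0 as neutral element. -/
def IsTConorm (S : I → I → I) : Prop :=
  (∀ x y, S x y = S y x) ∧
  (∀ x y z, S (S x y) z = S x (S y z)) ∧
  (∀ y, Monotone fun x => S x y) ∧
  (∀ x, Monotone fun y => S x y) ∧
  (∀ x, S x 0 = x)

/-- A t-subnorm: commutative, associative, increasing in each variable, bounded by `min`. -/
def IsTSubnorm (T : I → I → I) : Prop :=
  (∀ x y, T x y = T y x) ∧
  (∀ x y z, T (T x y) z = T x (T y z)) ∧
  (∀ y, Monotone fun x => T x y) ∧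
  (∀ x, Monotone fun y => T x y) ∧
  (∀ x y, T x y ≤ min x y)

/-- A pseudo automorphism of the unit interval. -/
def IsPseudoAutomorphism (F : I → I) : Prop :=
  Monotone F ∧ Continuous F ∧ (∀ x, F x = 1 ↔ x = 1) ∧ (∀ x, F x = 0 ↔ x = 0)

/-- A strict t-norm: a continuous t-norm strictly increasing in each variable on `(0,1]²`. -/
def IsStrictTNorm (T : I → I → I) : Prop :=
  IsTNorm T ∧ (Continuous fun p : I × I => T p.1 p.2) ∧
  (∀ y : I, 0 < y → StrictMonoOn (fun x => T x y) {x : I | 0 < x}) ∧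
  (∀ x : I, 0 < x → StrictMonoOn (fun y => T x y) {y : I | 0 < y})

theorem stmt0 (θ : I → ℝ≥0∞) (ϑ : ℝ≥0∞ → I)
    (hθc : Continuous θ) (hθd : Antitone θ)
    (hϑc : Continuous ϑ) (hϑd : Antitone ϑ)
    (hO : IsOverlap fun x y => ϑ (θ x + θ y)) :
    (∀ x : I, θ x = ⊤ ↔ x = 0) ∧ (∀ x : ℝ≥0∞, ϑ x = 0 ↔ x = ⊤) := by
  obtain ⟨-, hO2, -, -, -, -⟩ := hO
  -- key: positive arguments give nonzero values
  have key : ∀ x y : I, 0 < x → 0 < y → ϑ (θ x + θ y) ≠ 0 := by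
    intro x y hx hy h
    rcases mul_eq_zero.mp ((hO2 x y).mp h) with h | h
    · exact hx.ne' h
    · exact hy.ne' h
  have h00 : ϑ (θ 0 + θ 0) = 0 := (hO2 0 0).mpr (mul_zero 0)
  have h10 : ϑ (θ 1 + θ 0) = 0 := (hO2 1 0).mpr (mul_zero 1)
  -- sequence tending to 0 from the right
  have hmem : ∀ n : ℕ, (1 : ℝ) / (n + 1) ∈ Set.Icc (0:ℝ) 1 := by
    intro n
    constructor
    · positivity
    · rw [div_le_one (by positivity)]
      linarith [Nat.cast_nonneg (α := ℝ) n]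
  set s : ℕ → I := fun n => ⟨1 / (n + 1), hmem n⟩ with hs
  have hspos : ∀ n, 0 < s n := by
    intro n
    rw [← Subtype.coe_lt_coe]
    show (0:ℝ) < 1 / (n+1)
    positivity
  have hs0 : Tendsto s atTop (nhds (0 : I)) := by
    rw [tendsto_subtype_rng]
    exact tendsto_one_div_add_atTop_nhds_zero_nat
  -- main limit lemma : any zero of ϑ is ≥ θ 0 + θ 0
  have L : ∀ a : ℝ≥0∞, ϑ a = 0 → θ 0 + θ 0 ≤ a := by
    intro a ha
    have hlt : ∀ n, θ (s n) + θ (s n) ≤ a := by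
      intro n
      by_contra h
      push_neg at h
      exact key (s n) (s n) (hspos n) (hspos n)
        (le_antisymm (ha ▸ hϑd h.le) nonneg')
    have htend : Tendsto (fun n => θ (s n) + θ (s n)) atTop (nhds (θ 0 + θ 0)) :=
      ((hθc.tendsto 0).comp hs0).add ((hθc.tendsto 0).comp hs0)
    exact le_of_tendsto htend (Eventually.of_forall hlt)
  -- θ 0 = ⊤
  have hθ0 : θ 0 = ⊤ := by
    by_contra h
    have h1 : θ 0 + θ 0 ≤ θ 1 + θ 0 := L _ h10
    have h01 : θ 0 ≤ θ 1 := ENNReal.add_le_add_iff_right h |>.mp h1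
    have h10' : θ 1 = θ 0 := le_antisymm (hθd (zero_le_one)) h01
    refine key 1 1 (by norm_num) (by norm_num) ?_
    rw [h10']
    exact h00
  have hϑtop : ϑ ⊤ = 0 := by
    rw [hθ0] at h00; simpa using h00
  constructor
  · intro x
    constructor
    · intro hx
      have : ϑ (θ x + θ x) = 0 := by rw [hx]; simpa using hϑtop
      rcases mul_eq_zero.mp ((hO2 x x).mp this) with h | h <;> exact h
    · rintro rfl; exact hθ0
  · intro a
    constructor
    · intro ha
      have := L a ha
      rw [hθ0] at this
      simpa using this
    · rintro rfl; exact hϑtop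
end

section
/- Fix a∈[0,∞). Let θ:[0,1]→[0,∞] and ϑ:[0,∞]→[0,1] be continuous and decreasing functions such that: (1) θ(x)=∞ if and only if x=0; (2) θ(x)=a/2 if and only if x=1; (3) ϑ(x)=1 if and only if x∈[0,a]; (4) ϑ(x)=0 if and only if x=∞. Then the function O_{θ,ϑ}:[0,1]²→[0,1] defined by O_{θ,ϑ}(x,y)=ϑ(θ(x)+θ(y)) is an overlap function. -/
open unitInterval ENNReal

theorem stmt1 (a : ℝ≥0∞) (ha : a ≠ ⊤)
    (θ : I → ℝ≥0∞) (ϑ : ℝ≥0∞ → I)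
    (hθc : Continuous θ) (hθd : Antitone θ)
    (hϑc : Continuous ϑ) (hϑd : Antitone ϑ)
    (h1 : ∀ x : I, θ x = ⊤ ↔ x = 0)
    (h2 : ∀ x : I, θ x = a / 2 ↔ x = 1)
    (h3 : ∀ x : ℝ≥0∞, ϑ x = 1 ↔ x ≤ a)
    (h4 : ∀ x : ℝ≥0∞, ϑ x = 0 ↔ x = ⊤) :
    IsOverlap fun x y => ϑ (θ x + θ y) := by
  have hmul0 : ∀ x y : I, x * y = 0 ↔ x = 0 ∨ y = 0 := by
    intro x y
    constructor
    · intro h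
      have : (x : ℝ) * y = 0 := by exact_mod_cast congrArg Subtype.val h
      rcases mul_eq_zero.mp this with h | h
      · left; exact Subtype.ext h
      · right; exact Subtype.ext h
    · rintro (rfl | rfl) <;> simp
  have hmul1 : ∀ x y : I, x * y = 1 ↔ x = 1 ∧ y = 1 := by
    intro x y
    constructor
    · intro h
      have hh : (x : ℝ) * y = 1 := by exact_mod_cast congrArg Subtype.val h
      have hx1 : (x : ℝ) ≤ 1 := x.2.2
      have hy1 : (y : ℝ) ≤ 1 := y.2.2
      have hx0 : (0 : ℝ) ≤ x := x.2.1
      have hy0 : (0 : ℝ) ≤ y := y.2.1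
      have hxe : (x : ℝ) = 1 := by nlinarith
      have hye : (y : ℝ) = 1 := by nlinarith
      exact ⟨Subtype.ext hxe, Subtype.ext hye⟩
    · rintro ⟨rfl, rfl⟩; simp
  have hθge : ∀ x : I, a / 2 ≤ θ x := by
    intro x
    have hx1 : x ≤ 1 := Subtype.coe_le_coe.mp (by simpa using x.2.2)
    calc a / 2 = θ 1 := ((h2 1).mpr rfl).symm
    _ ≤ θ x := hθd hx1
  refine ⟨fun x y => by show ϑ (θ x + θ y) = ϑ (θ y + θ x); rw [add_comm], fun x y => ?_, fun x y => ?_, fun y => ?_, fun x => ?_, ?_⟩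
  · rw [h4, hmul0, ENNReal.add_eq_top, h1, h1]
  · rw [h3, hmul1]
    constructor
    · intro h
      have hx2 : a / 2 ≤ θ x := hθge x
      have hy2 : a / 2 ≤ θ y := hθge y
      have hxle : θ x ≤ a / 2 := by
        have : θ x + a / 2 ≤ a / 2 + a / 2 := le_trans (add_le_add_right hy2 _ |>.trans h) (le_of_eq (ENNReal.add_halves a).symm)
        exact ENNReal.le_of_add_le_add_right (by simpa using ne_top_of_le_ne_top ha ENNReal.half_le_self) this
      have hyle : θ y ≤ a / 2 := by
        have : θ y + a / 2 ≤ a / 2 + a / 2 := by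
          rw [add_comm] at h
          exact le_trans (add_le_add_right hx2 _ |>.trans h) (le_of_eq (ENNReal.add_halves a).symm)
        exact ENNReal.le_of_add_le_add_right (by simpa using ne_top_of_le_ne_top ha ENNReal.half_le_self) this
      exact ⟨(h2 x).mp (le_antisymm hxle hx2), (h2 y).mp (le_antisymm hyle hy2)⟩
    · rintro ⟨rfl, rfl⟩
      rw [(h2 1).mpr rfl, ENNReal.add_halves]
  · intro u v huv
    exact hϑd (add_le_add_left (hθd huv) _)
  · intro u v huv
    exact hϑd (add_le_add_right (hθd huv) _)
  · exact hϑc.comp ((hθc.comp continuous_fst).add (hθc.comp continuous_snd))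
end

section
/- Fix a∈[0,∞). Let θ:[0,1]→[0,∞] and ϑ:[0,∞]→[0,1] be continuous and decreasing functions such that: (i) for every x∈[0,∞], x∈[0,a] if and only if ϑ(x)=1; and (ii) the function O_{θ,ϑ}:[0,1]²→[0,1] defined by O_{θ,ϑ}(x,y)=ϑ(θ(x)+θ(y)) is an overlap function. Then for every x∈[0,1], θ(x)=a/2 if and only if x=1. -/
open unitInterval ENNReal

theorem stmt2 (a : ℝ≥0∞) (ha : a ≠ ⊤)
    (θ : I → ℝ≥0∞) (ϑ : ℝ≥0∞ → I)
    (hθc : Continuous θ) (hθd : Antitone θ)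
    (hϑc : Continuous ϑ) (hϑd : Antitone ϑ)
    (h1 : ∀ x : ℝ≥0∞, x ≤ a ↔ ϑ x = 1)
    (hO : IsOverlap fun x y => ϑ (θ x + θ y)) :
    ∀ x : I, θ x = a / 2 ↔ x = 1 := by
  obtain ⟨-, -, h3, -, -, -⟩ := hO
  -- θ 1 ≤ a / 2
  have hθ1 : θ 1 + θ 1 ≤ a := by
    rw [h1]
    exact (h3 1 1).mpr (by norm_num)
  have hle : θ 1 ≤ a / 2 := by
    rw [ENNReal.le_div_iff_mul_le (by norm_num) (by norm_num), mul_two]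
    exact hθ1
  -- θ 1 ≥ a / 2
  have hge : a / 2 ≤ θ 1 := by
    by_contra h
    push_neg at h
    have hθ1a : θ 1 ≤ a := hle.trans (ENNReal.half_le_self)
    have hθ1ne : θ 1 ≠ ⊤ := (h.trans_le (le_top.trans_eq rfl)).ne
    have hc : θ 1 < a - θ 1 := by
      calc θ 1 < a / 2 := h
      _ = a - a / 2 := (ENNReal.sub_half ha).symm
      _ ≤ a - θ 1 := tsub_le_tsub_left hle a
    -- find x < 1 with θ x < a - θ 1
    have hopen : {x : I | θ x < a - θ 1} ∈ nhds (1 : I) :=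
      (isOpen_Iio.preimage hθc).mem_nhds hc
    obtain ⟨ε, hε, hball⟩ := Metric.mem_nhds_iff.mp hopen
    set t : ℝ := max 0 (1 - ε / 2) with ht
    have ht0 : 0 ≤ t := le_max_left _ _
    have ht1 : t < 1 := max_lt (by norm_num) (by linarith)
    set x : I := ⟨t, ht0, ht1.le⟩ with hxdef
    have hx1 : x < 1 := Subtype.mk_lt_mk.mpr ht1
    have hx2 : θ x < a - θ 1 := by
      apply hball
      have : dist x (1 : I) = |t - 1| := rfl
      rw [Metric.mem_ball, this, abs_of_nonpos (by linarith)]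
      have : 1 - ε / 2 ≤ t := le_max_right _ _
      linarith
    have : θ x + θ 1 ≤ a := by
      have h' : θ x + θ 1 < (a - θ 1) + θ 1 := ENNReal.add_lt_add_right hθ1ne hx2
      rw [tsub_add_cancel_of_le hθ1a] at h'
      exact h'.le
    rw [h1] at this
    have := (h3 x 1).mp this
    rw [mul_one] at this
    exact hx1.ne this
  have hθ1eq : θ 1 = a / 2 := le_antisymm hle hge
  intro x
  constructor
  · intro hx
    have : θ x + θ x ≤ a := by rw [hx, ENNReal.add_halves]
    rw [h1] at this
    have hxx := (h3 x x).mp this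
    have hxr : (x : ℝ) * x = 1 := by exact_mod_cast congrArg (Subtype.val) hxx
    have h0 := x.2.1
    have h1' := x.2.2
    have : (x : ℝ) = 1 := by nlinarith
    exact Subtype.ext this
  · rintro rfl
    exact hθ1eq
end

section
/- Fix a∈[0,∞). Let θ:[0,1]→[0,∞] and ϑ:[0,∞]→[0,1] be continuous and decreasing functions such that: (i) for every x∈[0,1], θ(x)=a/2 if and only if x=1; and (ii) the function O_{θ,ϑ}:[0,1]²→[0,1] defined by O_{θ,ϑ}(x,y)=ϑ(θ(x)+θ(y)) is an overlap function. Then for every x∈[0,∞], x∈[0,a] if and only if ϑ(x)=1. -/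
open unitInterval ENNReal

open Topology Filter in
theorem stmt3 (a : ℝ≥0∞) (ha : a ≠ ⊤)
    (θ : I → ℝ≥0∞) (ϑ : ℝ≥0∞ → I)
    (hθc : Continuous θ) (hθd : Antitone θ)
    (hϑc : Continuous ϑ) (hϑd : Antitone ϑ)
    (h1 : ∀ x : I, θ x = a / 2 ↔ x = 1)
    (hO : IsOverlap fun x y => ϑ (θ x + θ y)) :
    ∀ x : ℝ≥0∞, x ≤ a ↔ ϑ x = 1 := by
  obtain ⟨hcomm, h0, h1O, hm1, hm2, hcont⟩ := hO
  have hθ1 : θ 1 = a / 2 := (h1 1).mpr rfl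
  have hϑa : ϑ a = 1 := by
    have := (h1O 1 1).mpr (by simp)
    simpa [hθ1, ENNReal.add_halves] using this
  intro x
  constructor
  · intro hx
    have h2 : (1:I) ≤ ϑ x := hϑa ▸ hϑd hx
    exact le_antisymm (ϑ x).2.2 h2
  · intro hx
    by_contra hax
    push_neg at hax
    have htend : Filter.Tendsto (fun u : I => θ u + a/2) (𝓝 (1:I)) (𝓝 a) := by
      have := (hθc.tendsto 1).add (tendsto_const_nhds (x := a/2))
      rwa [hθ1, ENNReal.add_halves] at this
    have hev : ∀ᶠ u : I in 𝓝 1, θ u + a/2 < x :=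
      htend.eventually_lt_const hax
    haveI hne : (𝓝[<] (1:I)).NeBot := by
      refine nhdsWithin_Iio_self_neBot' ⟨0, ?_⟩
      exact lt_of_le_of_ne (le_one') (by simp)
    obtain ⟨u, hu1, hu2⟩ := ((hev.filter_mono (nhdsWithin_le_nhds (s := Set.Iio (1:I)))).and
      self_mem_nhdsWithin).exists
    have hle : (1:I) ≤ ϑ (θ u + θ 1) := by
      rw [hθ1]
      calc (1:I) = ϑ x := hx.symm
      _ ≤ ϑ (θ u + a/2) := hϑd hu1.le
    have : u * 1 = 1 := (h1O u 1).mp (le_antisymm (ϑ _).2.2 hle)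
    simp at this
    exact absurd this (ne_of_lt hu2)
end

section
/- Fix a∈[0,∞). Let θ:[0,1]→[0,∞] be a continuous and strictly decreasing function such that: (1) θ(x)=∞ if and only if x=0; and (2) θ(x)=a/2 if and only if x=1. Define ϑ:[0,∞]→[0,1] by ϑ(y)=sup{z∈[0,1] : θ(z)+a/2>y} (the pseudo-inverse of the decreasing function θ+a/2). Then the function O_{θ,ϑ}:[0,1]²→[0,1] defined by O_{θ,ϑ}(x,y)=ϑ(θ(x)+θ(y)) is a positive continuous t-norm. -/
open unitInterval ENNReal

theorem stmt5 (a : ℝ≥0∞) (ha : a ≠ ⊤)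
    (θ : I → ℝ≥0∞) (hθc : Continuous θ) (hθs : StrictAnti θ)
    (h1 : ∀ x : I, θ x = ⊤ ↔ x = 0)
    (h2 : ∀ x : I, θ x = a / 2 ↔ x = 1)
    (ϑ : ℝ≥0∞ → I)
    (hϑ : ∀ y : ℝ≥0∞, (ϑ y : ℝ) = sSup (Subtype.val '' {z : I | y < θ z + a / 2})) :
    IsTNorm (fun x y => ϑ (θ x + θ y)) ∧
    (Continuous fun p : I × I => ϑ (θ p.1 + θ p.2)) ∧
    (∀ x y : I, ϑ (θ x + θ y) = 0 → x = 0 ∨ y = 0) := by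
  have ha2 : a / 2 ≠ ⊤ := by simp [ENNReal.div_eq_top, ha]
  have hθ1 : θ 1 = a / 2 := (h2 1).mpr rfl
  have hθ0 : θ 0 = ⊤ := (h1 0).mpr rfl
  have hge : ∀ x : I, a / 2 ≤ θ x := fun x => hθ1 ▸ hθs.antitone le_one'
  have hsum : ∀ x y : I, a ≤ θ x + θ y := fun x y => by
    calc a = a/2 + a/2 := (ENNReal.add_halves a).symm
    _ ≤ θ x + θ y := add_le_add (hge x) (hge y)
  -- sup computation
  have hsup : ∀ z : I, 0 < z → sSup (Subtype.val '' {w : I | w < z}) = (z : ℝ) := by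
    intro z hz
    have himg : Subtype.val '' {w : I | w < z} = Set.Ico 0 (z:ℝ) := by
      ext x
      constructor
      · rintro ⟨w, hw, rfl⟩
        exact ⟨w.2.1, hw⟩
      · rintro ⟨h0, hx⟩
        exact ⟨⟨x, h0, hx.le.trans z.2.2⟩, by exact_mod_cast hx, rfl⟩
    rw [himg, csSup_Ico (by exact_mod_cast hz)]
  -- key: ϑ inverts z ↦ θ z + a/2
  have key : ∀ (z : I) (y : ℝ≥0∞), θ z + a/2 = y → ϑ y = z := by
    intro z y hzy
    rcases eq_or_ne z 0 with rfl | hz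
    · have hy : y = ⊤ := by rw [← hzy, hθ0, top_add]
      subst hy
      have hempty : {w : I | (⊤:ℝ≥0∞) < θ w + a/2} = ∅ := by
        ext w; simp
      have h := hϑ ⊤
      rw [hempty, Set.image_empty, Real.sSup_empty] at h
      exact Subtype.ext h
    · have hz' : (0:I) < z := nonneg'.lt_of_ne (Ne.symm hz)
      have hset : {w : I | y < θ w + a/2} = {w : I | w < z} := by
        subst hzy
        ext w
        simp only [Set.mem_setOf_eq]
        rw [ENNReal.add_lt_add_iff_right ha2, hθs.lt_iff_gt]
      have h := hϑ y
      rw [hset, hsup z hz'] at h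
      exact Subtype.ext h
  -- key2: θ (ϑ s) = s - a/2 for s ≥ a
  have key2 : ∀ s : ℝ≥0∞, a ≤ s → θ (ϑ s) = s - a/2 := by
    intro s hs
    rcases eq_or_ne s ⊤ with rfl | hs'
    · rw [key 0 ⊤ (by rw [hθ0, top_add]), hθ0, ENNReal.top_sub ha2]
    · have h1' : a/2 ≤ s := le_trans (ENNReal.half_le_self) hs
      have hmem : s - a/2 ∈ Set.Icc (θ 1) (θ 0) := by
        refine ⟨?_, by rw [hθ0]; exact le_top⟩
        rw [hθ1]
        exact ENNReal.le_sub_of_add_le_right ha2 (by rwa [ENNReal.add_halves])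
      obtain ⟨z, hz⟩ := intermediate_value_univ 1 0 hθc hmem
      rw [key z s (by rw [hz, tsub_add_cancel_of_le h1']), hz]
  have keyT : ∀ x y : I, θ (ϑ (θ x + θ y)) = θ x + θ y - a/2 :=
    fun x y => key2 _ (hsum x y)
  refine ⟨⟨?_, ?_, ?_, ?_, ?_⟩, ?_, ?_⟩
  · -- commutativity
    intro x y
    simp only [add_comm]
  · -- associativity
    intro x y z
    apply hθs.injective
    simp only []
    rw [keyT, keyT, keyT, keyT,
      ENNReal.sub_add_eq_add_sub (le_trans (hge x) le_self_add) ha2]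
    congr 1
    have : θ y + θ z - a/2 + θ x = θ y + θ z + θ x - a/2 :=
      ENNReal.sub_add_eq_add_sub (le_trans (hge y) le_self_add) ha2
    rw [add_comm (θ x) (θ y + θ z - a/2), this]
    ring_nf
  · -- monotone in first argument
    intro y x x' hx
    simp only []
    rw [← hθs.le_iff_ge, keyT, keyT]
    exact tsub_le_tsub_right (add_le_add_left (hθs.antitone hx) _) _
  · -- monotone in second argument
    intro x y y' hy
    simp only []
    rw [← hθs.le_iff_ge, keyT, keyT]
    exact tsub_le_tsub_right (add_le_add_right (hθs.antitone hy) _) _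
  · -- neutral element
    intro x
    simp only []
    rw [hθ1]
    exact key x _ rfl
  · -- continuity
    have hf : Continuous (fun z : I => θ z + a/2) := hθc.add continuous_const
    have hfi : Function.Injective (fun z : I => θ z + a/2) := by
      intro z w h
      exact hθs.injective ((ENNReal.add_left_inj ha2).mp h)
    have hemb := (hf.isClosedEmbedding hfi).toIsEmbedding
    rw [hemb.continuous_iff]
    have : ((fun z : I => θ z + a/2) ∘ fun p : I × I => ϑ (θ p.1 + θ p.2)) =
        fun p : I × I => θ p.1 + θ p.2 := by
      funext p
      show θ (ϑ (θ p.1 + θ p.2)) + a/2 = θ p.1 + θ p.2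
      rw [keyT, tsub_add_cancel_of_le (le_trans (hge p.1) le_self_add)]
    rw [this]
    exact ((hθc.comp continuous_fst).add (hθc.comp continuous_snd))
  · -- positivity
    intro x y h0
    have h := keyT x y
    rw [h0, hθ0] at h
    have htop : θ x + θ y = ⊤ :=
      top_le_iff.mp (h ▸ tsub_le_self : (⊤:ℝ≥0∞) ≤ θ x + θ y)
    rcases ENNReal.add_eq_top.mp htop with hx | hy
    · exact Or.inl ((h1 x).mp hx)
    · exact Or.inr ((h1 y).mp hy)
end

section
/- Fix a∈[0,∞). Let θ:[0,1]→[0,∞] and ϑ:[0,∞]→[0,1] be continuous and decreasing functions such that θ(x)=a/2 if and only if x=1, and suppose that the function O_{θ,ϑ}:[0,1]²→[0,1] defined by O_{θ,ϑ}(x,y)=ϑ(θ(x)+θ(y)) is an overlap function having 1 as neutral element (O_{θ,ϑ}(x,1)=x for every x∈[0,1]). Then O_{θ,ϑ} is associative: O_{θ,ϑ}(O_{θ,ϑ}(x,y),z)=O_{θ,ϑ}(x,O_{θ,ϑ}(y,z)) for all x,y,z∈[0,1]. -/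
open unitInterval ENNReal

theorem stmt6 (a : ℝ≥0∞) (ha : a ≠ ⊤)
    (θ : I → ℝ≥0∞) (ϑ : ℝ≥0∞ → I)
    (hθc : Continuous θ) (hθd : Antitone θ)
    (hϑc : Continuous ϑ) (hϑd : Antitone ϑ)
    (h2 : ∀ x : I, θ x = a / 2 ↔ x = 1)
    (hO : IsOverlap fun x y => ϑ (θ x + θ y))
    (hneutral : ∀ x : I, ϑ (θ x + θ 1) = x) :
    ∀ x y z : I, ϑ (θ (ϑ (θ x + θ y)) + θ z) = ϑ (θ x + θ (ϑ (θ y + θ z))) := by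
  have hθ1 : θ 1 = a / 2 := (h2 1).mpr rfl
  have hc_ne : a / 2 ≠ ⊤ := ne_top_of_le_ne_top ha ENNReal.half_le_self
  have hge : ∀ x : I, a / 2 ≤ θ x := fun x => hθ1 ▸ hθd le_one'
  have hle : ∀ x : I, θ x ≤ θ 0 := fun x => hθd nonneg'
  have h00 : ϑ (θ 0 + θ 1) = 0 := (hO.2.1 0 1).mpr (zero_mul 1)
  have hϑ0 : ∀ t, θ 0 + a / 2 ≤ t → ϑ t = 0 := by
    intro t ht
    have : ϑ t ≤ ϑ (θ 0 + θ 1) := hϑd (by rw [hθ1]; exact ht)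
    rw [h00] at this
    exact le_antisymm this nonneg'
  have hrange : ∀ t, a / 2 ≤ t → t ≤ θ 0 → ∃ x, θ x = t := by
    intro t h1 h2'
    exact intermediate_value_univ 1 0 hθc ⟨hθ1 ▸ h1, h2'⟩
  have key : ∀ x y : I, ∀ r : ℝ≥0∞,
      ϑ (θ (ϑ (θ x + θ y)) + (a / 2 + r)) = ϑ (θ x + θ y + r) := by
    intro x y r
    set s := θ x + θ y with hs
    by_cases hw : ϑ s = 0
    · -- both sides are 0
      have hxy : x * y = 0 := (hO.2.1 x y).mp hw
      have hxy' : x = 0 ∨ y = 0 := by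
        rcases mul_eq_zero.mp (by exact_mod_cast congrArg (Subtype.val) hxy) with h | h
        · exact Or.inl (Subtype.ext h)
        · exact Or.inr (Subtype.ext h)
      have hs_big : θ 0 + a / 2 ≤ s := by
        rcases hxy' with h | h
        · rw [hs, h]; exact add_le_add le_rfl (hge y)
        · rw [hs, h, add_comm (θ x) (θ 0)]; exact add_le_add le_rfl (hge x)
      rw [hw]
      rw [hϑ0 (θ (0:I) + (a / 2 + r)) (by rw [← add_assoc]; exact le_add_right le_rfl),
          hϑ0 (s + r) (hs_big.trans (le_add_right le_rfl))]
    · -- ϑ s ≠ 0 : then θ (ϑ s) + a/2 = s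
      have hslt : s < θ 0 + a / 2 := by
        by_contra h
        exact hw (hϑ0 s (not_lt.mp h))
      have hs_ge : a ≤ s := by
        calc a = a / 2 + a / 2 := (ENNReal.add_halves a).symm
        _ ≤ s := add_le_add (hge x) (hge y)
      have h1 : a / 2 ≤ s - a / 2 :=
        ENNReal.le_sub_of_add_le_right hc_ne (by rw [ENNReal.add_halves]; exact hs_ge)
      have h2' : s - a / 2 ≤ θ 0 := tsub_le_iff_right.mpr hslt.le
      obtain ⟨x', hx'⟩ := hrange (s - a / 2) h1 h2'
      have hsum : θ x' + a / 2 = s := by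
        rw [hx']
        exact tsub_add_cancel_of_le ((hge x).trans (le_add_right le_rfl))
      have hwx : ϑ s = x' := by
        rw [← hsum, ← hθ1]; exact hneutral x'
      have hpq : θ (ϑ s) + a / 2 = s := by rw [hwx]; exact hsum
      rw [← add_assoc, hpq]
  intro x y z
  have r1 := key x y (θ z - a / 2)
  have r2 := key y z (θ x - a / 2)
  have hz' : a / 2 + (θ z - a / 2) = θ z := add_tsub_cancel_of_le (hge z)
  have hx' : a / 2 + (θ x - a / 2) = θ x := add_tsub_cancel_of_le (hge x)
  rw [hz'] at r1
  rw [hx'] at r2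
  rw [r1, add_comm (θ x) (θ (ϑ (θ y + θ z))), r2]
  congr 1
  set u := θ x - a / 2 with hu
  set v := θ z - a / 2 with hv
  have hxu : θ x = u + a / 2 := (tsub_add_cancel_of_le (hge x)).symm
  have hzv : θ z = v + a / 2 := (tsub_add_cancel_of_le (hge z)).symm
  rw [hxu, hzv]; ring
end

section
/- Fix a∈[0,∞). Let θ:[0,1]→[0,∞] and ϑ:[0,∞]→[0,1] be continuous and decreasing functions such that θ(x)=a/2 if and only if x=1, and suppose that the function O_{θ,ϑ}:[0,1]²→[0,1] defined by O_{θ,ϑ}(x,y)=ϑ(θ(x)+θ(y)) is an overlap function. Then the following three statements are equivalent: (1) O_{θ,ϑ} is a t-norm; (2) 1 is a neutral element of O_{θ,ϑ} (O_{θ,ϑ}(x,1)=x for every x∈[0,1]); (3) ϑ(θ(x)+a/2)=x for every x∈[0,1]. -/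
open unitInterval ENNReal

theorem stmt7 (a : ℝ≥0∞) (ha : a ≠ ⊤)
    (θ : I → ℝ≥0∞) (ϑ : ℝ≥0∞ → I)
    (hθc : Continuous θ) (hθd : Antitone θ)
    (hϑc : Continuous ϑ) (hϑd : Antitone ϑ)
    (h2 : ∀ x : I, θ x = a / 2 ↔ x = 1)
    (hO : IsOverlap fun x y => ϑ (θ x + θ y)) :
    (IsTNorm (fun x y => ϑ (θ x + θ y)) ↔ ∀ x : I, ϑ (θ x + θ 1) = x) ∧
    ((∀ x : I, ϑ (θ x + θ 1) = x) ↔ ∀ x : I, ϑ (θ x + a / 2) = x) := by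

  have hθ1 : θ 1 = a / 2 := (h2 1).mpr rfl
  have ha2 : a / 2 ≠ ⊤ := by
    simp [ENNReal.div_eq_top, ha]
  have hge : ∀ x : I, a / 2 ≤ θ x := fun x => hθ1 ▸ hθd (le_one x)
  constructor
  · constructor
    · intro hT
      exact hT.2.2.2.2
    · intro H
      -- H : ∀ x, ϑ (θ x + θ 1) = x, i.e. ϑ (θ x + a/2) = x
      have H3 : ∀ x : I, ϑ (θ x + a / 2) = x := fun x => by
        rw [← hθ1]; exact H x
      have hzero : ∀ p : ℝ≥0∞, θ 0 + a / 2 ≤ p → ϑ p = 0 := by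
        intro p hp
        have h0 : ϑ (θ 0 + a / 2) = 0 := H3 0
        exact le_antisymm (h0 ▸ hϑd hp) (unitInterval.nonneg')
      have hsurj : Set.Icc (θ 1) (θ 0) ⊆ Set.range θ :=
        intermediate_value_univ (1 : I) 0 hθc
      -- key: for q = θ x + θ y, ϑ (θ (ϑ q) + θ z) = ϑ (q + θ z - a/2)
      have key : ∀ x y z : I,
          ϑ (θ (ϑ (θ x + θ y)) + θ z) = ϑ (θ x + θ y + θ z - a / 2) := by
        intro x y z
        set q := θ x + θ y with hq
        have haq : a ≤ q := by
          calc a = a / 2 + a / 2 := (ENNReal.add_halves a).symm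
          _ ≤ q := add_le_add (hge x) (hge y)
        by_cases hcase : q ≤ θ 0 + a / 2
        · -- q - a/2 is in the range of θ
          have h1 : a / 2 ≤ q - a / 2 := by
            refine ENNReal.le_sub_of_add_le_right ha2 ?_
            rwa [ENNReal.add_halves]
          have h2' : q - a / 2 ≤ θ 0 := tsub_le_iff_right.mpr hcase
          obtain ⟨t, ht⟩ := hsurj ⟨hθ1 ▸ h1, h2'⟩
          have hqt : θ t + a / 2 = q := by
            rw [ht]; exact tsub_add_cancel_of_le (le_trans (le_trans le_rfl
              (by calc a / 2 ≤ a / 2 + a / 2 := le_self_add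
                    _ = a := ENNReal.add_halves a)) haq)
          have hϑq : ϑ q = t := by rw [← hqt]; exact H3 t
          rw [hϑq, ht]
          congr 1
          -- (q - a/2) + θ z = q + θ z - a/2
          have : q = (q - a / 2) + a / 2 :=
            (tsub_add_cancel_of_le (le_trans (by
              calc a / 2 ≤ a / 2 + a / 2 := le_self_add
                _ = a := ENNReal.add_halves a) haq)).symm
          rw [this]
          rw [ENNReal.add_sub_cancel_right ha2]
          rw [add_right_comm, ENNReal.add_sub_cancel_right ha2]
        · push_neg at hcase
          have hϑq : ϑ q = 0 := hzero q hcase.le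
          rw [hϑq]
          have l1 : ϑ (θ 0 + θ z) = 0 := hzero _ (add_le_add_right (hge z) _)
          have l2 : ϑ (q + θ z - a / 2) = 0 := by
            apply hzero
            have : q ≤ q + θ z - a / 2 := by
              have h1 : q + a / 2 ≤ q + θ z := add_le_add_right (hge z) q
              have := tsub_le_tsub_right h1 (a / 2)
              rwa [ENNReal.add_sub_cancel_right ha2] at this
            exact le_trans hcase.le this
          rw [l1, l2]
      refine ⟨hO.1, ?_, hO.2.2.2.1, hO.2.2.2.2.1, H⟩
      intro x y z
      have e1 : ϑ (θ (ϑ (θ x + θ y)) + θ z) = ϑ (θ x + θ y + θ z - a / 2) :=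
        key x y z
      have e2 : ϑ (θ (ϑ (θ y + θ z)) + θ x) = ϑ (θ y + θ z + θ x - a / 2) :=
        key y z x
      simp only []
      rw [e1, add_comm (θ x) (θ (ϑ (θ y + θ z))), e2]
      congr 2
      ring
  · constructor
    · intro H x; rw [← hθ1]; exact H x
    · intro H x; rw [hθ1]; exact H x
end

section
/- Fix a∈[0,∞). Let θ:[0,1]→[0,∞] and ϑ:[0,∞]→[0,1] be continuous and decreasing functions, and suppose that the function O_{θ,ϑ}:[0,1]²→[0,1] defined by O_{θ,ϑ}(x,y)=ϑ(θ(x)+θ(y)) is an overlap function satisfying at least one of the following two conditions: (1) θ(x)=a/2 if and only if x=1; (2) ϑ(x)=1 if and only if x∈[0,a]. Then there exist a t-subnorm T_sub:[0,1]²→[0,1] and a pseudo automorphism F:[0,1]→[0,1] such that O_{θ,ϑ}(x,y)=F(T_sub(x,y)) for all x,y∈[0,1]. -/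
open unitInterval ENNReal

open Topology Set Filter

namespace Stmt8Aux

/-- The underlying set used for the pseudo-inverse. -/
def pset (G : ℝ → ℝ≥0∞) (u : ℝ≥0∞) : Set ℝ :=
  insert 0 {r : ℝ | r ∈ Set.Icc (0:ℝ) 1 ∧ u < G r}

lemma pset_nonempty (G : ℝ → ℝ≥0∞) (u : ℝ≥0∞) : (pset G u).Nonempty :=
  ⟨0, Set.mem_insert _ _⟩

lemma pset_bddAbove (G : ℝ → ℝ≥0∞) (u : ℝ≥0∞) : BddAbove (pset G u) := by
  refine ⟨1, ?_⟩
  rintro r (rfl | ⟨⟨_, h⟩, _⟩)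
  · norm_num
  · exact h

/-- Pseudo-inverse of a decreasing function `G`, valued in the unit interval. -/
noncomputable def pinv (G : ℝ → ℝ≥0∞) (u : ℝ≥0∞) : I :=
  ⟨sSup (pset G u), by
    constructor
    · exact le_csSup (pset_bddAbove G u) (Set.mem_insert _ _)
    · refine csSup_le (pset_nonempty G u) ?_
      rintro r (rfl | ⟨⟨_, h⟩, _⟩)
      · norm_num
      · exact h⟩

lemma pinv_antitone (G : ℝ → ℝ≥0∞) : Antitone (pinv G) := by
  intro u u' huu
  refine Subtype.mk_le_mk.2 (csSup_le_csSup (pset_bddAbove G u) (pset_nonempty G u') ?_)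
  rintro r (rfl | ⟨hr, h⟩)
  · exact Set.mem_insert _ _
  · exact Set.mem_insert_of_mem _ ⟨hr, huu.trans_lt h⟩

lemma pinv_le (G : ℝ → ℝ≥0∞) (u : ℝ≥0∞) (x : I)
    (h : ∀ r, r ∈ Set.Icc (0:ℝ) 1 → u < G r → r ≤ (x:ℝ)) : pinv G u ≤ x := by
  refine Subtype.mk_le_mk.2 (csSup_le (pset_nonempty G u) ?_)
  rintro r (rfl | ⟨hr, hu⟩)
  · exact x.2.1
  · exact h r hr hu

lemma pinv_eq_zero (G : ℝ → ℝ≥0∞) (hGa : Antitone G) {u : ℝ≥0∞} (hu : G 0 ≤ u) :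
    pinv G u = 0 := by
  have hset : pset G u = {0} := by
    apply Set.Subset.antisymm
    · rintro r (rfl | ⟨hr, h⟩)
      · rfl
      · exact absurd h (not_lt.2 ((hGa hr.1).trans hu))
    · rintro r rfl; exact Set.mem_insert _ _
  refine Subtype.ext ?_
  show sSup (pset G u) = 0
  rw [hset, csSup_singleton]

lemma pinv_key (G : ℝ → ℝ≥0∞) (hGc : Continuous G) (hGa : Antitone G) (hG1 : G 1 = 0)
    (u : ℝ≥0∞) : G ((pinv G u : I) : ℝ) = min u (G 0) := by
  rcases le_or_gt (G 0) u with hcase | hcase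
  · rw [pinv_eq_zero G hGa hcase, min_eq_right hcase]
    norm_num
  · set s : ℝ := ((pinv G u : I) : ℝ) with hsdef
    have hs01 : s ∈ Set.Icc (0:ℝ) 1 := (pinv G u).2
    have h1 : u ≤ G s := by
      by_contra hcon
      push_neg at hcon
      obtain ⟨v, hv1, hv2⟩ := exists_between hcon
      have hvmem : v ∈ Set.Icc (G s) (G 0) := ⟨hv1.le, (hv2.trans hcase).le⟩
      obtain ⟨t, ht, hGt⟩ := intermediate_value_Icc' hs01.1 hGc.continuousOn hvmem
      have hts : t < s := by
        rcases lt_or_eq_of_le ht.2 with h | h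
        · exact h
        · rw [h] at hGt; exact absurd hGt (ne_of_lt hv1)
      obtain ⟨r, hr, htr⟩ := exists_lt_of_lt_csSup (pset_nonempty G u) hts
      rcases hr with rfl | ⟨_, hr2⟩
      · exact absurd htr (not_lt.2 ht.1)
      · have : G r ≤ v := hGt ▸ hGa htr.le
        exact absurd (hr2.trans_le this) (not_lt.2 hv2.le)
    have h2 : G s ≤ u := by
      by_contra hcon
      push_neg at hcon
      obtain ⟨v, hv1, hv2⟩ := exists_between hcon
      have hvmem : v ∈ Set.Icc (G 1) (G s) := ⟨hG1 ▸ zero_le (a := v), hv2.le⟩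
      obtain ⟨t, ht, hGt⟩ := intermediate_value_Icc' hs01.2 hGc.continuousOn hvmem
      have hmem : t ∈ pset G u :=
        Set.mem_insert_of_mem _ ⟨⟨hs01.1.trans ht.1, ht.2⟩, hGt ▸ hv1⟩
      have hts : t ≤ s := le_csSup (pset_bddAbove G u) hmem
      have : t = s := le_antisymm hts ht.1
      rw [this] at hGt
      exact absurd hGt (ne_of_gt hv2)
    rw [min_eq_left hcase.le]
    exact le_antisymm h2 h1

end Stmt8Aux

theorem stmt8 (a : ℝ≥0∞) (ha : a ≠ ⊤)
    (θ : I → ℝ≥0∞) (ϑ : ℝ≥0∞ → I)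
    (hθc : Continuous θ) (hθd : Antitone θ)
    (hϑc : Continuous ϑ) (hϑd : Antitone ϑ)
    (hO : IsOverlap fun x y => ϑ (θ x + θ y))
    (hcond : (∀ x : I, θ x = a / 2 ↔ x = 1) ∨ (∀ x : ℝ≥0∞, ϑ x = 1 ↔ x ≤ a)) :
    ∃ (Tsub : I → I → I) (F : I → I), IsTSubnorm Tsub ∧ IsPseudoAutomorphism F ∧
      ∀ x y : I, ϑ (θ x + θ y) = F (Tsub x y) := by
  obtain ⟨hOc, hO0, hO1, hOm1, hOm2, hOcont⟩ := hO
  have key : θ 1 = a / 2 ∧ ∀ z : I, a / 2 ≤ θ z := by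
    rcases hcond with h | h
    · have h1 : θ 1 = a / 2 := (h 1).2 rfl
      exact ⟨h1, fun z => h1 ▸ hθd ((le_one' : z ≤ 1))⟩
    · have hle : θ 1 ≤ a / 2 := by
        have h11 : ϑ (θ 1 + θ 1) = 1 := (hO1 1 1).2 (mul_one 1)
        have h2 := (h _).1 h11
        rw [ENNReal.le_div_iff_mul_le (Or.inl two_ne_zero) (Or.inl ofNat_ne_top)]
        calc θ 1 * 2 = θ 1 + θ 1 := by ring
        _ ≤ a := h2
      have hlt : ∀ z : I, z < 1 → a / 2 ≤ θ z := by
        intro z hz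
        by_contra hcon
        push_neg at hcon
        have h2 : θ z + θ z ≤ a := by
          have h3 : θ z * 2 ≤ a := by
            rw [← ENNReal.le_div_iff_mul_le (Or.inl two_ne_zero) (Or.inl ofNat_ne_top)]
            exact hcon.le
          calc θ z + θ z = θ z * 2 := by ring
          _ ≤ a := h3
        have h4 : ϑ (θ z + θ z) = 1 := (h _).2 h2
        have hzz : z * z = 1 := (hO1 z z).1 h4
        have hz1 : z = 1 := by
          have h' : (z : ℝ) * (z : ℝ) = 1 := congrArg Subtype.val hzz
          have := z.2.1; have := z.2.2
          exact Subtype.ext (show (z:ℝ) = ((1:I):ℝ) by show (z:ℝ) = 1; nlinarith)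
        exact absurd hz1 (ne_of_lt hz)
      have hge : a / 2 ≤ θ 1 := by
        set seq : ℕ → I := fun n => ⟨1 - 1/(n+1), by
          constructor
          · have h1 : (1:ℝ)/(n+1) ≤ 1 := by
              rw [div_le_one (by positivity)]
              linarith [Nat.cast_nonneg (α := ℝ) n]
            linarith
          · have h2 : (0:ℝ) ≤ 1/(n+1) := by positivity
            linarith⟩ with hseqdef
        have hseqlt : ∀ n, seq n < 1 := by
          intro n
          refine Subtype.coe_lt_coe.1 ?_
          show 1 - 1/((n:ℝ)+1) < (1:ℝ)
          have h2 : (0:ℝ) < 1/(n+1) := by positivity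
          linarith
        have hseqt : Tendsto seq atTop (𝓝 1) := by
          apply tendsto_subtype_rng.2
          show Tendsto (fun n : ℕ => 1 - 1/((n:ℝ)+1)) atTop (𝓝 (1:ℝ))
          have h2 : Tendsto (fun n : ℕ => 1 / ((n:ℝ) + 1)) atTop (𝓝 0) := tendsto_one_div_add_atTop_nhds_zero_nat
          simpa using tendsto_const_nhds.sub h2
        exact ge_of_tendsto' ((hθc.tendsto 1).comp hseqt) (fun n => hlt (seq n) (hseqlt n))
      refine ⟨le_antisymm hle hge, fun z => ?_⟩
      rcases lt_or_eq_of_le ((le_one' : z ≤ 1)) with hz | hz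
      · exact hlt z hz
      · rw [hz]; exact hge
  obtain ⟨hθ1, hP⟩ := key
  set b : ℝ≥0∞ := a / 2 with hbdef
  have hab : b + b = a := ENNReal.add_halves a
  set g : I → ℝ≥0∞ := fun z => θ z - b with hgdef
  have hgc : Continuous g := (ENNReal.continuous_sub_right b).comp hθc
  have hgant : Antitone g := fun x y hxy => tsub_le_tsub_right (hθd hxy) _
  have hθg : ∀ z, g z + b = θ z := fun z => tsub_add_cancel_of_le (hP z)
  have hg1 : g 1 = 0 := by
    show θ 1 - b = 0
    rw [hθ1]
    exact tsub_self _
  set G : ℝ → ℝ≥0∞ := fun r => g (Set.projIcc (0:ℝ) 1 zero_le_one r) with hGdef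
  have hGc : Continuous G := hgc.comp continuous_projIcc
  have hGa : Antitone G := fun r r' hrr => hgant (monotone_projIcc zero_le_one hrr)
  have hGg : ∀ z : I, G (z : ℝ) = g z := by
    intro z
    show g (Set.projIcc (0:ℝ) 1 zero_le_one (z : ℝ)) = g z
    congr 1
    rw [Set.projIcc_of_mem zero_le_one z.2]
  have hG1 : G 1 = 0 := by
    have h2 : ((1:I) : ℝ) = (1:ℝ) := rfl
    rw [← h2, hGg 1, hg1]
  have hG0 : G 0 = g 0 := by
    have h2 : ((0:I) : ℝ) = (0:ℝ) := rfl
    rw [← h2, hGg 0]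
  set hh : ℝ≥0∞ → I := Stmt8Aux.pinv G with hhdef
  have hkey : ∀ u, g (hh u) = min u (g 0) := by
    intro u
    have h2 := Stmt8Aux.pinv_key G hGc hGa hG1 u
    rw [hGg] at h2
    rw [h2, hG0]
  have hzero : ∀ u, g 0 ≤ u → hh u = 0 := fun u hu =>
    Stmt8Aux.pinv_eq_zero G hGa (by rw [hG0]; exact hu)
  set T : I → I → I := fun x y => hh (g x + g y) with hTdef
  have hTle : ∀ x y : I, T x y ≤ x := by
    intro x y
    apply Stmt8Aux.pinv_le
    intro r hr hu
    by_contra hcon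
    push_neg at hcon
    have hxr : x ≤ (⟨r, hr⟩ : I) := le_of_lt (Subtype.coe_lt_coe.1 hcon)
    have hgle : g ⟨r, hr⟩ ≤ g x := hgant hxr
    have hGr : G r = g ⟨r, hr⟩ := hGg ⟨r, hr⟩
    rw [hGr] at hu
    exact absurd hgle (not_le.2 (le_self_add.trans_lt hu))
  have hTcomm : ∀ x y, T x y = T y x := fun x y => by
    show hh _ = hh _
    rw [add_comm]
  have hmin : ∀ u w, w ≤ g 0 → hh (min u (g 0) + w) = hh (u + w) := by
    intro u w hw
    rcases le_total u (g 0) with huu | huu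
    · rw [min_eq_left huu]
    · rw [min_eq_right huu, hzero _ le_self_add, hzero _ (huu.trans le_self_add)]
  have hTassoc : ∀ x y z, T (T x y) z = T x (T y z) := by
    intro x y z
    show hh (g (hh (g x + g y)) + g z) = hh (g x + g (hh (g y + g z)))
    rw [hkey, hkey, hmin _ _ (hgant nonneg'), add_comm (g x) (min (g y + g z) (g 0)), hmin _ _ (hgant nonneg')]
    congr 1
    ring
  have hTm1 : ∀ y, Monotone fun x => T x y := by
    intro y x x' hxx
    exact Stmt8Aux.pinv_antitone G (add_le_add_left (hgant hxx) _)
  have hTm2 : ∀ x, Monotone fun y => T x y := by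
    intro x y y' hyy
    exact Stmt8Aux.pinv_antitone G (add_le_add_right (hgant hyy) _)
  set F : I → I := fun z => ϑ (θ z + θ 1) with hFdef
  have hFm : Monotone F := fun z z' hz => hϑd (add_le_add_left (hθd hz) _)
  have hFc : Continuous F := hOcont.comp (continuous_id.prodMk continuous_const)
  have hF1 : ∀ z, F z = 1 ↔ z = 1 := by
    intro z
    constructor
    · intro hz
      have h2 := (hO1 z 1).1 hz
      rwa [mul_one] at h2
    · intro hz
      exact (hO1 z 1).2 (by rw [hz, mul_one])
  have hF0 : ∀ z, F z = 0 ↔ z = 0 := by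
    intro z
    constructor
    · intro hz
      have h2 := (hO0 z 1).1 hz
      rwa [mul_one] at h2
    · intro hz
      exact (hO0 z 1).2 (by rw [hz, mul_one])
  have hga : ∀ x y : I, g x + g y + a = θ x + θ y := by
    intro x y
    rw [← hab, ← hθg x, ← hθg y]
    ring
  refine ⟨T, F, ⟨hTcomm, hTassoc, hTm1, hTm2,
    fun x y => le_min (hTle x y) (by rw [hTcomm]; exact hTle y x)⟩,
    ⟨hFm, hFc, hF1, hF0⟩, ?_⟩
  intro x y
  show ϑ (θ x + θ y) = ϑ (θ (hh (g x + g y)) + θ 1)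
  rw [← hθg (hh (g x + g y)), hkey, hθ1]
  rw [show min (g x + g y) (g 0) + b + b = min (g x + g y) (g 0) + a by
    rw [add_assoc, hab]]
  rcases le_total (g x + g y) (g 0) with hc | hc
  · rw [min_eq_left hc, hga]
  · rw [min_eq_right hc]
    have h01 : ϑ (g 0 + a) = 0 := by
      have h2 : g 0 + a = θ 0 + θ 1 := by
        rw [← hga 0 1, hg1, add_zero]
      rw [h2]
      exact (hO0 0 1).2 (zero_mul 1)
    have hle0 : ϑ (θ x + θ y) ≤ 0 := by
      rw [← hga x y]
      calc ϑ (g x + g y + a) ≤ ϑ (g 0 + a) := hϑd (add_le_add_left hc a)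
      _ = 0 := h01
    rw [h01]
    exact le_antisymm hle0 nonneg'
end

section
/- Fix a∈[0,∞). Let θ:[0,1]→[0,∞] be a continuous and decreasing function that is NOT strictly decreasing, and let ϑ:[0,∞]→[0,1] be a continuous and decreasing function. Suppose that the function O_{θ,ϑ}:[0,1]²→[0,1] defined by O_{θ,ϑ}(x,y)=ϑ(θ(x)+θ(y)) is an overlap function satisfying at least one of the following two conditions: (1) θ(x)=a/2 if and only if x=1; (2) ϑ(x)=1 if and only if x∈[0,a]. Then there do NOT exist a positive continuous t-norm T:[0,1]²→[0,1] and a pseudo automorphism F:[0,1]→[0,1] such that O_{θ,ϑ}(x,y)=F(T(x,y)) for all x,y∈[0,1]. -/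
open unitInterval ENNReal
open Filter Topology

theorem stmt10 (a : ℝ≥0∞) (ha : a ≠ ⊤)
    (θ : I → ℝ≥0∞) (ϑ : ℝ≥0∞ → I)
    (hθc : Continuous θ) (hθd : Antitone θ) (hθns : ¬ StrictAnti θ)
    (hϑc : Continuous ϑ) (hϑd : Antitone ϑ)
    (hO : IsOverlap fun x y => ϑ (θ x + θ y))
    (hcond : (∀ x : I, θ x = a / 2 ↔ x = 1) ∨ (∀ x : ℝ≥0∞, ϑ x = 1 ↔ x ≤ a)) :
    ¬ ∃ (T : I → I → I) (F : I → I),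
        IsTNorm T ∧ (Continuous fun p : I × I => T p.1 p.2) ∧
        (∀ x y : I, T x y = 0 → x = 0 ∨ y = 0) ∧
        IsPseudoAutomorphism F ∧ ∀ x y : I, ϑ (θ x + θ y) = F (T x y) := by
  rintro ⟨T, F, hT, hTc, hTpos, hF, heq⟩
  obtain ⟨Tcomm, Tassoc, Tmono₁, Tmono₂, Tone⟩ := hT
  obtain ⟨Fmono, Fcont, F1iff, F0iff⟩ := hF
  have O0 : ∀ x y : I, ϑ (θ x + θ y) = 0 ↔ x * y = 0 := hO.2.1
  have O1 : ∀ x y : I, ϑ (θ x + θ y) = 1 ↔ x * y = 1 := hO.2.2.1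
  -- basic unit–interval facts
  have hmul0 : ∀ x y : I, x * y = 0 ↔ x = 0 ∨ y = 0 := by
    intro x y
    constructor
    · intro h
      have hc : (x:ℝ) * y = 0 := by rw [← Set.Icc.coe_mul, h]; rfl
      rcases mul_eq_zero.1 hc with h' | h'
      · exact Or.inl (Subtype.ext h')
      · exact Or.inr (Subtype.ext h')
    · rintro (rfl | rfl) <;> simp
  have hmul1 : ∀ x y : I, x * y = 1 ↔ x = 1 ∧ y = 1 := by
    intro x y
    constructor
    · intro h
      have hc : (x:ℝ) * y = 1 := by rw [← Set.Icc.coe_mul, h]; rfl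
      have hy : (1:ℝ) ≤ y := by nlinarith [x.2.1, x.2.2, y.2.1, y.2.2]
      have hx : (1:ℝ) ≤ x := by nlinarith [x.2.1, x.2.2, y.2.1, y.2.2]
      exact ⟨Subtype.ext (le_antisymm x.2.2 hx), Subtype.ext (le_antisymm y.2.2 hy)⟩
    · rintro ⟨rfl, rfl⟩; simp
  have O0' : ∀ x y : I, ϑ (θ x + θ y) = 0 ↔ x = 0 ∨ y = 0 := by
    intro x y; rw [O0, hmul0]
  have O1' : ∀ x y : I, ϑ (θ x + θ y) = 1 ↔ x = 1 ∧ y = 1 := by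
    intro x y; rw [O1, hmul1]
  have hI10 : (1:I) ≠ 0 := by
    intro h; exact one_ne_zero (congrArg Subtype.val h)
  -- T basics
  have Tzero : ∀ x : I, T x 0 = 0 := by
    intro x
    refine le_antisymm ?_ (nonneg _)
    calc T x 0 = T 0 x := Tcomm x 0
      _ ≤ T 0 1 := Tmono₂ 0 (le_one x)
      _ = 0 := Tone 0
  have Tle₁ : ∀ x y : I, T x y ≤ x := by
    intro x y
    calc T x y ≤ T x 1 := Tmono₂ x (le_one y)
      _ = x := Tone x
  have Tle₂ : ∀ x y : I, T x y ≤ y := by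
    intro x y; rw [Tcomm]; exact Tle₁ y x
  have Fdef : ∀ x : I, F x = ϑ (θ x + θ 1) := by
    intro x
    have h := heq x 1
    rw [Tone] at h
    exact h.symm
  have hble : ∀ x : I, θ 1 ≤ θ x := fun x => hθd (le_one x)
  -- θ 0 = ⊤
  have θ0top : θ 0 = ⊤ := by
    by_contra hD
    have hb_ne : θ 1 ≠ θ 0 := by
      intro hEq
      have h00 : ϑ (θ 0 + θ 0) = 0 := (O0' 0 0).2 (Or.inl rfl)
      have h11 : ϑ (θ 1 + θ 1) = 1 := (O1' 1 1).2 ⟨rfl, rfl⟩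
      rw [← hEq] at h00
      rw [h00] at h11
      exact hI10 h11.symm
    have hblt : θ 1 < θ 0 := (hble 0).lt_of_ne hb_ne
    set t0 := (θ 0 + θ 1) / 2 with ht0
    have ht0b : θ 1 ≤ t0 := by
      rw [ht0, ENNReal.le_div_iff_mul_le (by norm_num) (by norm_num), mul_two]
      exact add_le_add_left (hble 0) _
    have ht0lt : t0 < θ 0 := by
      rw [ht0, ENNReal.div_lt_iff (by norm_num) (by norm_num), mul_two]
      exact ENNReal.add_lt_add_left hD hblt
    obtain ⟨x₁, hx₁⟩ := intermediate_value_univ (1:I) (0:I) hθc ⟨ht0b, ht0lt.le⟩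
    have hx₁0 : x₁ ≠ 0 := by
      intro h
      rw [h] at hx₁
      rw [hx₁] at ht0lt
      exact lt_irrefl _ ht0lt
    have hsum : θ x₁ + θ x₁ = θ 0 + θ 1 := by
      rw [hx₁, ← two_mul, ht0]
      exact ENNReal.mul_div_cancel' (by norm_num) (by norm_num)
    have h01 : ϑ (θ 0 + θ 1) = 0 := (O0' 0 1).2 (Or.inl rfl)
    have : ϑ (θ x₁ + θ x₁) = 0 := by rw [hsum]; exact h01
    rcases (O0' x₁ x₁).1 this with h | h <;> exact hx₁0 h
  have ϑtop : ϑ ⊤ = 0 := by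
    have h := (O0' 0 0).2 (Or.inl rfl)
    rwa [θ0top, top_add] at h
  have θfin : ∀ x : I, x ≠ 0 → θ x ≠ ⊤ := by
    intro x hx htop
    have : ϑ (θ x + θ 1) = 0 := by rw [htop, top_add]; exact ϑtop
    rcases (O0' x 1).1 this with h | h
    · exact hx h
    · exact hI10 h
  have bfin : θ 1 ≠ ⊤ := θfin 1 hI10
  have θsurj : ∀ t : ℝ≥0∞, θ 1 ≤ t → ∃ x : I, θ x = t := by
    intro t ht
    exact intermediate_value_univ (1:I) (0:I) hθc ⟨ht, θ0top ▸ le_top⟩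
  -- strictness at 1 from the condition
  have θlt1 : ∀ x : I, x < 1 → θ 1 < θ x := by
    intro x hx
    rcases hcond with h1 | h2
    · have hb : θ 1 = a / 2 := (h1 1).2 rfl
      refine (hble x).lt_of_ne ?_
      intro hEq
      exact hx.ne ((h1 x).1 (hEq.symm.trans hb))
    · have h2b : θ 1 + θ 1 ≤ a := (h2 _).1 ((O1' 1 1).2 ⟨rfl, rfl⟩)
      have hne : ¬ (θ x + θ 1 ≤ a) := by
        intro hle
        exact hx.ne ((O1' x 1).1 ((h2 _).2 hle)).1
      have hgt : a < θ x + θ 1 := lt_of_not_ge hne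
      have : θ 1 + θ 1 < θ x + θ 1 := lt_of_le_of_lt h2b hgt
      exact (ENNReal.add_lt_add_iff_right bfin).1 this
  -- the non-strict pair
  obtain ⟨u, v, huv, hθuv⟩ : ∃ u v : I, u < v ∧ θ u = θ v := by
    simp only [StrictAnti] at hθns
    push_neg at hθns
    obtain ⟨u, v, huv, hle⟩ := hθns
    exact ⟨u, v, huv, le_antisymm hle (hθd huv.le)⟩
  have hv0 : v ≠ 0 := by
    intro h
    rw [h] at huv
    exact absurd (nonneg u) (not_le.2 huv)
  -- minimal point of the flat
  obtain ⟨u₀, hu₀S, hu₀lb⟩ : ∃ u₀, IsLeast {x : I | θ x = θ v} u₀ :=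
    (isClosed_singleton.preimage hθc).isCompact.exists_isLeast ⟨u, hθuv⟩
  have hθu₀ : θ u₀ = θ v := hu₀S
  have hu₀0 : u₀ ≠ 0 := by
    intro h
    rw [h, θ0top] at hθu₀
    exact θfin v hv0 hθu₀.symm
  have hu₀v : u₀ < v := lt_of_le_of_lt (hu₀lb hθuv) huv
  have hv1 : v < 1 := by
    refine (le_one v).lt_of_ne ?_
    intro h
    have h' : v = 1 := Subtype.ext h
    have := θlt1 u₀ (lt_of_lt_of_le hu₀v (le_one v))
    rw [hθu₀, h'] at this
    exact lt_irrefl _ this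
  have strictu₀ : ∀ x : I, x < u₀ → θ v < θ x := by
    intro x hx
    refine (hθu₀ ▸ hθd hx.le).lt_of_ne ?_
    intro hEq
    exact absurd (hu₀lb hEq.symm) (not_le.2 hx)
  -- the level m and the point A
  set m := ϑ (θ v + θ 1) with hm
  have hFu₀ : F u₀ = m := by rw [Fdef, hθu₀]
  have hm0 : m ≠ 0 := by
    intro h
    have : ϑ (θ u₀ + θ 1) = 0 := by rw [hθu₀]; exact h
    rcases (O0' u₀ 1).1 this with h' | h'
    · exact hu₀0 h'
    · exact hI10 h'
  have hm1 : m ≠ 1 := by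
    intro h
    have : ϑ (θ u₀ + θ 1) = 1 := by rw [hθu₀]; exact h
    exact (hu₀v.trans hv1).ne ((O1' u₀ 1).1 this).1
  obtain ⟨A, hAS, hAlb⟩ : ∃ A, IsLeast {x : I | F x = m} A :=
    (isClosed_singleton.preimage Fcont).isCompact.exists_isLeast ⟨u₀, hFu₀⟩
  have hFA : F A = m := hAS
  have hAu₀ : A ≤ u₀ := hAlb hFu₀
  have hA0 : A ≠ 0 := by
    intro h
    rw [h] at hFA
    exact hm0 (hFA.symm.trans ((F0iff 0).2 rfl))
  have hAltm : ∀ x : I, x < A → F x < m := by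
    intro x hx
    refine (hFA ▸ Fmono hx.le).lt_of_ne ?_
    intro hEq
    exact absurd (hAlb hEq) (not_le.2 hx)
  -- KEY-A : T A z < A for every z < 1
  have hKeyA : ∀ z : I, z < 1 → T A z < A := by
    intro z hz
    have hFAdef : ϑ (θ A + θ 1) = m := (Fdef A) ▸ hFA
    have hlt : ϑ (θ A + θ z) < m := by
      have hle' : ϑ (θ A + θ z) ≤ m := by
        rw [← hFAdef]
        exact hϑd (add_le_add_right (hble z) _)
      refine hle'.lt_of_ne ?_
      intro heqm
      rcases eq_or_ne z 0 with rfl | hz0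
      · rw [θ0top, add_top, ϑtop] at heqm
        exact hm0 heqm.symm
      · have hbz : θ 1 < θ z := θlt1 z hz
        obtain ⟨x', hx'⟩ := θsurj (θ A + (θ z - θ 1))
          (le_trans (hble A) le_self_add)
        have hx'b : θ x' + θ 1 = θ A + θ z := by
          rw [hx', add_assoc, tsub_add_cancel_of_le hbz.le]
        have hFx' : F x' = m := by rw [Fdef, hx'b, heqm]
        have hx'A : x' < A := by
          by_contra hcon
          have : θ x' ≤ θ A := hθd (not_lt.1 hcon)
          have h2 : θ A < θ x' := by
            rw [hx']
            refine ENNReal.lt_add_right (θfin A hA0) ?_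
            simp only [ne_eq, tsub_eq_zero_iff_le, not_le]
            exact hbz
          exact absurd this (not_le.2 h2)
        exact (hAltm x' hx'A).ne hFx'
    by_contra hcon
    have : F A ≤ F (T A z) := Fmono (not_lt.1 hcon)
    rw [hFA, ← heq A z] at this
    exact absurd this (not_le.2 hlt)
  -- continuity helpers
  have Tcontr : ∀ y : I, Continuous fun x => T x y := by
    intro y
    exact hTc.comp (continuous_id.prodMk continuous_const)
  have Tcontl : ∀ x : I, Continuous fun y => T x y := by
    intro x
    exact hTc.comp (continuous_const.prodMk continuous_id)
  -- the pinching point w*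
  obtain ⟨w, hwS, hwub⟩ : ∃ w, IsGreatest {s : I | T u₀ s = T v s} w := by
    refine (isClosed_eq (Tcontl u₀) (Tcontl v)).isCompact.exists_isGreatest ⟨0, ?_⟩
    simp only [Set.mem_setOf_eq, Tzero]
  have hwW : T u₀ w = T v w := hwS
  have hw1 : w < 1 := by
    refine (le_one w).lt_of_ne ?_
    intro h
    have h' : w = 1 := Subtype.ext h
    rw [h', Tone, Tone] at hwW
    exact hu₀v.ne hwW
  -- θ-equality along products (uses the moving–window argument)
  have θpair : ∀ s : I, s ≠ 0 → θ (T u₀ s) = θ (T v s) := by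
    intro s hs0
    set p := T u₀ s with hp
    set q := T v s with hq
    have hp0 : p ≠ 0 := by
      intro h
      rcases hTpos u₀ s h with h' | h'
      · exact hu₀0 h'
      · exact hs0 h'
    have hq0 : q ≠ 0 := by
      intro h
      rcases hTpos v s h with h' | h'
      · exact hv0 h'
      · exact hs0 h'
    have hΦ : ∀ r : I, ϑ (θ p + θ r) = ϑ (θ q + θ r) := by
      intro r
      calc ϑ (θ p + θ r) = F (T p r) := heq p r
        _ = F (T u₀ (T s r)) := by rw [hp, Tassoc]
        _ = ϑ (θ u₀ + θ (T s r)) := (heq _ _).symm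
        _ = ϑ (θ v + θ (T s r)) := by rw [hθu₀]
        _ = F (T v (T s r)) := heq _ _
        _ = F (T q r) := by rw [hq, Tassoc]
        _ = ϑ (θ q + θ r) := (heq q r).symm
    have hpq : p ≤ q := Tmono₁ s hu₀v.le
    have hqp : θ q ≤ θ p := hθd hpq
    by_contra hne
    have hlt : θ q < θ p := hqp.lt_of_ne (Ne.symm hne)
    set d := θ p - θ q with hd
    have hd0 : d ≠ 0 := by
      simp only [hd, ne_eq, tsub_eq_zero_iff_le, not_le]
      exact hlt
    have hqd : θ q + d = θ p := add_tsub_cancel_of_le hqp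
    have shift : ∀ t : ℝ≥0∞, θ 1 ≤ t → ϑ (θ q + (t + d)) = ϑ (θ q + t) := by
      intro t ht
      obtain ⟨r, hr⟩ := θsurj t ht
      calc ϑ (θ q + (t + d)) = ϑ (θ q + d + t) := by rw [← add_assoc, add_right_comm]
        _ = ϑ (θ p + t) := by rw [hqd]
        _ = ϑ (θ p + θ r) := by rw [hr]
        _ = ϑ (θ q + θ r) := hΦ r
        _ = ϑ (θ q + t) := by rw [hr]
    have iter : ∀ n : ℕ, ϑ (θ q + (θ 1 + n * d)) = ϑ (θ q + θ 1) := by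
      intro n
      induction n with
      | zero => simp
      | succ k ih =>
        have h1 : θ 1 + ((k:ℝ≥0∞) + 1) * d = (θ 1 + (k:ℝ≥0∞) * d) + d := by
          ring
        rw [Nat.cast_succ, h1, shift (θ 1 + (k:ℝ≥0∞) * d) le_self_add, ih]
    have harg : Tendsto (fun n : ℕ => θ q + (θ 1 + (n:ℝ≥0∞) * d)) atTop (𝓝 ⊤) := by
      have h1 : Tendsto (fun n : ℕ => (n:ℝ≥0∞) * d) atTop (𝓝 ⊤) := by
        have := ENNReal.Tendsto.mul_const (a := ⊤) (b := d)
          ENNReal.tendsto_nat_nhds_top (Or.inl (by norm_num))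
        rwa [ENNReal.top_mul hd0] at this
      refine tendsto_nhds_top_mono h1 (Eventually.of_forall ?_)
      intro n
      calc (n:ℝ≥0∞) * d ≤ θ 1 + (n:ℝ≥0∞) * d := le_add_self
        _ ≤ θ q + (θ 1 + (n:ℝ≥0∞) * d) := le_add_self
    have h2 : Tendsto (fun n : ℕ => ϑ (θ q + (θ 1 + (n:ℝ≥0∞) * d))) atTop (𝓝 (ϑ ⊤)) :=
      (hϑc.tendsto ⊤).comp harg
    simp only [iter] at h2
    have hconst : ϑ (θ q + θ 1) = ϑ ⊤ := tendsto_nhds_unique tendsto_const_nhds h2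
    have : F q = 0 := by rw [Fdef, hconst, ϑtop]
    exact hq0 ((F0iff q).1 this)
  -- the chain argument: θ (T v w) = θ v
  have chainW : θ (T v w) = θ v := by
    obtain ⟨s₁, hs₁S, hs₁lb⟩ :
        ∃ s₁, IsLeast {s : I | s ∈ Set.Icc w 1 ∧ θ (T v s) = θ v} s₁ := by
      refine (IsClosed.inter isClosed_Icc
        (isClosed_singleton.preimage (hθc.comp (Tcontl v)))).isCompact.exists_isLeast
        ⟨1, ⟨⟨le_one w, le_refl 1⟩, by show θ (T v 1) = θ v; rw [Tone]⟩⟩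
    obtain ⟨⟨hws₁, hs₁1⟩, hs₁c⟩ := hs₁S
    rcases eq_or_lt_of_le hws₁ with hEq | hwlt
    · rw [← hEq] at hs₁c
      exact hs₁c
    · exfalso
      have hs₁0 : s₁ ≠ 0 := by
        intro h
        rw [h] at hwlt
        exact absurd (nonneg w) (not_le.2 hwlt)
      set p₁ := T u₀ s₁ with hp₁
      have hθp₁ : θ p₁ = θ v := (θpair s₁ hs₁0).trans hs₁c
      have hql : T v w ≤ p₁ := by
        rw [← hwW, hp₁]
        exact Tmono₂ u₀ hwlt.le
      have hqr : p₁ ≤ T v s₁ := Tmono₁ s₁ hu₀v.le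
      -- find s₄ ∈ [w, s₁] with T v s₄ = p₁
      obtain ⟨s₃, hs₃⟩ :
          ∃ s₃ : I, ((T v s₃ : I) : ℝ) = (p₁ : ℝ) := by
        refine intermediate_value_univ w s₁
          (continuous_subtype_val.comp (Tcontl v)) ⟨?_, ?_⟩
        · exact hql
        · exact hqr
      have hs₃' : T v s₃ = p₁ := Subtype.coe_injective hs₃
      obtain ⟨s₄, hs₄mem, hs₄⟩ :
          ∃ s₄ : I, s₄ ∈ Set.Icc w s₁ ∧ T v s₄ = p₁ := by
        rcases le_total s₃ w with h1 | h1
        · refine ⟨w, ⟨le_refl w, hwlt.le⟩, ?_⟩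
          refine le_antisymm hql ?_
          rw [← hs₃']
          exact Tmono₂ v h1
        · rcases le_total s₁ s₃ with h2 | h2
          · refine ⟨s₁, ⟨hwlt.le, le_refl s₁⟩, ?_⟩
            refine le_antisymm ?_ hqr
            rw [← hs₃']
            exact Tmono₂ v h2
          · exact ⟨s₃, ⟨h1, h2⟩, hs₃'⟩
      have hs₄Sc : s₄ ∈ {s : I | s ∈ Set.Icc w 1 ∧ θ (T v s) = θ v} := by
        refine ⟨⟨hs₄mem.1, le_trans hs₄mem.2 hs₁1⟩, ?_⟩
        rw [hs₄, hθp₁]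
      have hs₄eq : s₄ = s₁ := le_antisymm hs₄mem.2 (hs₁lb hs₄Sc)
      rw [hs₄eq] at hs₄
      have : s₁ ∈ {s : I | T u₀ s = T v s} := hs₄.symm
      exact absurd (hwub this) (not_le.2 hwlt)
  -- T u₀ w = u₀
  have hA' : T u₀ w = u₀ := by
    refine le_antisymm (Tle₁ u₀ w) ?_
    by_contra hcon
    have hlt : T u₀ w < u₀ := lt_of_not_ge fun h => hcon h
    have := strictu₀ (T u₀ w) hlt
    rw [hwW, chainW] at this
    exact lt_irrefl _ this
  -- idempotent e with u₀ ≤ e ≤ w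
  obtain ⟨e, heS, helb⟩ :
      ∃ e, IsLeast {x : I | x ∈ Set.Icc 0 w ∧ T u₀ x = u₀} e := by
    refine (IsClosed.inter isClosed_Icc
      (isClosed_singleton.preimage (Tcontl u₀))).isCompact.exists_isLeast
      ⟨w, ⟨⟨nonneg w, le_refl w⟩, hA'⟩⟩
  obtain ⟨⟨-, hew⟩, he_u₀⟩ := heS
  have hu₀e : u₀ ≤ e := by
    rw [← he_u₀]
    exact Tle₂ u₀ e
  have hTee : T e e = e := by
    have hmem : T e e ∈ {x : I | x ∈ Set.Icc 0 w ∧ T u₀ x = u₀} := by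
      refine ⟨⟨nonneg _, le_trans (Tle₁ e e) hew⟩, ?_⟩
      rw [← Tassoc, he_u₀, he_u₀]
    exact le_antisymm (Tle₁ e e) (helb hmem)
  have he1 : e < 1 := lt_of_le_of_lt hew hw1
  -- final contradiction via L1
  have hAe : A ≤ e := le_trans hAu₀ hu₀e
  obtain ⟨r', hr'⟩ : ∃ r' : I, ((T r' e : I) : ℝ) = (A : ℝ) := by
    refine intermediate_value_univ A e
      (continuous_subtype_val.comp (Tcontr e)) ⟨?_, ?_⟩
    · exact Tle₁ A e
    · show (A:ℝ) ≤ ((T e e : I) : ℝ)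
      rw [hTee]
      exact hAe
  have hgr' : T r' e = A := Subtype.coe_injective hr'
  have hTAe : T A e = A := by
    calc T A e = T (T r' e) e := by rw [hgr']
      _ = T r' (T e e) := Tassoc r' e e
      _ = T r' e := by rw [hTee]
      _ = A := hgr'
  have := hKeyA e he1
  rw [hTAe] at this
  exact lt_irrefl _ this
end

section
/- Let t:[0,1]→[0,∞] and s:[0,∞]→[0,1] be continuous and increasing functions, and suppose that the function G_{t,s}:[0,1]²→[0,1] defined by G_{t,s}(x,y)=s(t(x)+t(y)) is a grouping function. Then: (1) for every x∈[0,1], t(x)=∞ if and only if x=1; and (2) for every x∈[0,∞], s(x)=1 if and only if x=∞. -/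
open unitInterval ENNReal

theorem stmt11 (t : I → ℝ≥0∞) (s : ℝ≥0∞ → I)
    (htc : Continuous t) (hti : Monotone t)
    (hsc : Continuous s) (hsi : Monotone s)
    (hG : IsGrouping fun x y => s (t x + t y)) :
    (∀ x : I, t x = ⊤ ↔ x = 1) ∧ (∀ x : ℝ≥0∞, s x = 1 ↔ x = ⊤) := by
  obtain ⟨-, h0, h1, -, -, -⟩ := hG
  simp only at h0 h1
  have hI01 : (0 : I) ≠ 1 := by
    intro h
    have := congrArg Subtype.val h
    norm_num at this
  have hcont : Continuous fun x : I => t x + t x := htc.add htc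
  have hs2t0 : s (t 0 + t 0) = 0 := (h0 0 0).mpr ⟨rfl, rfl⟩
  have hs10 : s (t 1 + t 0) = 1 := (h1 1 0).mpr (Or.inl rfl)
  have contra01 : ∀ u v : ℝ≥0∞, s u = 0 → s v = 1 → v ≤ u → False := by
    intro u v hu hv huv
    have h2 : (1 : I) ≤ 0 := by rw [← hu, ← hv]; exact hsi huv
    have h3 := Subtype.coe_le_coe.2 h2
    norm_num at h3
  have ht0top : t 0 ≠ ⊤ := by
    intro h
    exact contra01 _ _ hs2t0 hs10 (by simp [h])
  have ht01 : t 0 < t 1 := by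
    by_contra h
    push_neg at h
    exact contra01 _ _ hs2t0 hs10 (add_le_add h le_rfl)
  have ht1 : t 1 = ⊤ := by
    by_contra h
    have hmem : t 1 + t 0 ∈ Set.Icc (t 0 + t 0) (t 1 + t 1) :=
      ⟨add_le_add ht01.le le_rfl, add_le_add le_rfl ht01.le⟩
    obtain ⟨x, hx⟩ := intermediate_value_univ (0 : I) 1 hcont hmem
    simp only at hx
    have hx1 : x = 1 := by
      have := (h1 x x).mp (by rw [hx]; exact hs10)
      tauto
    rw [hx1] at hx
    have : t 1 = t 0 := by
      rw [← ENNReal.add_right_inj h]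
      exact hx
    exact absurd this ht01.ne'
  have hstop : s ⊤ = 1 := by
    have := (h1 1 1).mpr (Or.inl rfl)
    rwa [ht1, top_add] at this
  have part1 : ∀ x : I, t x = ⊤ ↔ x = 1 := by
    intro x
    constructor
    · intro hx
      have := (h1 x x).mp (by rw [hx, top_add]; exact hstop)
      tauto
    · intro hx; rw [hx, ht1]
  refine ⟨part1, fun u => ⟨fun hu => ?_, fun hu => hu ▸ hstop⟩⟩
  by_contra hune
  have hle : t 0 + t 0 ≤ u := by
    by_contra h
    push_neg at h
    exact contra01 _ _ hs2t0 hu h.le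
  have hmem : u ∈ Set.Icc (t 0 + t 0) (t 1 + t 1) := ⟨hle, by simp [ht1]⟩
  obtain ⟨x, hx⟩ := intermediate_value_univ (0 : I) 1 hcont hmem
  simp only at hx
  have hx1 : x = 1 := by
    have := (h1 x x).mp (by rw [hx]; exact hu)
    tauto
  rw [hx1, ht1, top_add] at hx
  exact hune hx.symm
end

section
/- Fix a∈[0,∞). Let t:[0,1]→[0,∞] and s:[0,∞]→[0,1] be continuous and increasing functions such that: (1) t(x)=∞ if and only if x=1; (2) t(x)=a/2 if and only if x=0; (3) s(x)=0 if and only if x∈[0,a]; (4) s(x)=1 if and only if x=∞. Then the function G_{t,s}:[0,1]²→[0,1] defined by G_{t,s}(x,y)=s(t(x)+t(y)) is a grouping function. -/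
open unitInterval ENNReal

theorem stmt12 (a : ℝ≥0∞) (ha : a ≠ ⊤)
    (t : I → ℝ≥0∞) (s : ℝ≥0∞ → I)
    (htc : Continuous t) (hti : Monotone t)
    (hsc : Continuous s) (hsi : Monotone s)
    (h1 : ∀ x : I, t x = ⊤ ↔ x = 1)
    (h2 : ∀ x : I, t x = a / 2 ↔ x = 0)
    (h3 : ∀ x : ℝ≥0∞, s x = 0 ↔ x ≤ a)
    (h4 : ∀ x : ℝ≥0∞, s x = 1 ↔ x = ⊤) :
    IsGrouping fun x y => s (t x + t y) := by
  have hlow : ∀ x : I, a / 2 ≤ t x := fun x => by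
    have : t 0 ≤ t x := hti x.2.1
    rwa [(h2 0).mpr rfl] at this
  have hkey : ∀ x y : I, s (t x + t y) = 0 ↔ x = 0 ∧ y = 0 := by
    intro x y
    rw [h3]
    constructor
    · intro h
      by_contra hc
      rcases not_and_or.mp hc with hx | hy
      · have hx' : a / 2 < t x := lt_of_le_of_ne (hlow x) (fun he => hx ((h2 x).mp he.symm))
        have : a < t x + t y := by
          calc a = a / 2 + a / 2 := (ENNReal.add_halves a).symm
          _ < t x + t y := ENNReal.add_lt_add_of_lt_of_le
              (by simp [ENNReal.div_eq_top, ha]) hx' (hlow y)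
        exact absurd h (not_le.mpr this)
      · have hy' : a / 2 < t y := lt_of_le_of_ne (hlow y) (fun he => hy ((h2 y).mp he.symm))
        have : a < t x + t y := by
          calc a = a / 2 + a / 2 := (ENNReal.add_halves a).symm
          _ < t y + t x := ENNReal.add_lt_add_of_lt_of_le
              (by simp [ENNReal.div_eq_top, ha]) hy' (hlow x)
          _ = t x + t y := add_comm _ _
        exact absurd h (not_le.mpr this)
    · rintro ⟨hx, hy⟩
      rw [hx, hy, (h2 0).mpr rfl, ENNReal.add_halves]
  refine ⟨fun x y => by simp only []; rw [add_comm], hkey, ?_, ?_, ?_, ?_⟩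
  · intro x y
    rw [h4, ENNReal.add_eq_top, h1, h1]
  · intro y x₁ x₂ h
    exact hsi (add_le_add_left (hti h) _)
  · intro x y₁ y₂ h
    exact hsi (add_le_add_right (hti h) _)
  · exact hsc.comp ((htc.comp continuous_fst).add (htc.comp continuous_snd))
end

section
/- Fix a∈[0,∞). Let t:[0,1]→[0,∞] and s:[0,∞]→[0,1] be continuous and increasing functions such that: (i) for every x∈[0,∞], s(x)=0 if and only if x∈[0,a]; and (ii) the function G_{t,s}:[0,1]²→[0,1] defined by G_{t,s}(x,y)=s(t(x)+t(y)) is a grouping function. Then for every x∈[0,1], t(x)=a/2 if and only if x=0. -/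
open unitInterval ENNReal

theorem stmt13 (a : ℝ≥0∞) (ha : a ≠ ⊤)
    (t : I → ℝ≥0∞) (s : ℝ≥0∞ → I)
    (htc : Continuous t) (hti : Monotone t)
    (hsc : Continuous s) (hsi : Monotone s)
    (h1 : ∀ x : ℝ≥0∞, s x = 0 ↔ x ≤ a)
    (hG : IsGrouping fun x y => s (t x + t y)) :
    ∀ x : I, t x = a / 2 ↔ x = 0 := by
  obtain ⟨-, hG0, -, -, -, -⟩ := hG
  -- `t 0 + t 0 ≤ a`
  have h00 : t 0 + t 0 ≤ a := by
    have := (hG0 0 0).2 ⟨rfl, rfl⟩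
    exact (h1 _).1 this
  -- for x ≠ 0, `a ≤ t x + t 0`
  have hx0 : ∀ x : I, x ≠ 0 → a ≤ t x + t 0 := by
    intro x hx
    by_contra h
    push_neg at h
    have hs0 : s (t x + t 0) = 0 := (h1 _).2 h.le
    exact hx ((hG0 x 0).1 hs0).1
  -- sequence tending to 0 from positive values
  have hseq : ∀ n : ℕ, ((⟨1 / (n + 2 : ℝ), by
      constructor
      · positivity
      · rw [div_le_one (by positivity)]
        linarith [Nat.cast_nonneg (α := ℝ) n]⟩ : I)) ≠ 0 := by
    intro n h
    have := congrArg Subtype.val h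
    simp only [Set.Icc.coe_zero] at this
    have h2 : (0:ℝ) < 1 / (n + 2 : ℝ) := by positivity
    rw [this] at h2
    exact lt_irrefl _ h2
  set u : ℕ → I := fun n => ⟨1 / (n + 2 : ℝ), by
      constructor
      · positivity
      · rw [div_le_one (by positivity)]
        linarith [Nat.cast_nonneg (α := ℝ) n]⟩ with hu
  have hu0 : Filter.Tendsto u Filter.atTop (nhds 0) := by
    rw [tendsto_subtype_rng]
    simp only [hu]
    have : Filter.Tendsto (fun n : ℕ => 1 / ((n : ℝ) + 2)) Filter.atTop (nhds 0) := by
      apply Filter.Tendsto.div_atTop tendsto_const_nhds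
      exact Filter.tendsto_atTop_add_const_right _ _ tendsto_natCast_atTop_atTop
    exact this
  have htu : Filter.Tendsto (fun n => t (u n)) Filter.atTop (nhds (t 0)) :=
    (htc.tendsto 0).comp hu0
  have hge : a - t 0 ≤ t 0 := by
    refine ge_of_tendsto' htu fun n => ?_
    rw [tsub_le_iff_right]
    exact hx0 (u n) (hseq n)
  have ht0a : t 0 ≤ a := le_trans (le_add_self) h00
  have hkey : t 0 + t 0 = a := by
    refine le_antisymm h00 ?_
    calc a = a - t 0 + t 0 := (tsub_add_cancel_of_le ht0a).symm
    _ ≤ t 0 + t 0 := add_le_add_left hge _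
  have ht0 : t 0 = a / 2 := by
    rw [ENNReal.eq_div_iff two_ne_zero ENNReal.ofNat_ne_top, two_mul, hkey]
  intro x
  constructor
  · intro htx
    by_contra hx
    have := hx0 x hx
    rw [htx, ht0, ENNReal.add_halves] at this
    -- a ≤ a fine; need contradiction differently
    have h2 : s (t x + t x) ≠ 0 := by
      intro h
      exact hx ((hG0 x x).1 h).1
    have : ¬ (t x + t x ≤ a) := fun h => h2 ((h1 _).2 h)
    rw [htx, ENNReal.add_halves] at this
    exact this le_rfl
  · intro hx
    rw [hx, ht0]
end

section
/- Fix a∈[0,∞). Let t:[0,1]→[0,∞] be a continuous and strictly increasing function such that: (1) t(x)=∞ if and only if x=1; and (2) t(x)=a/2 if and only if x=0. Define s:[0,∞]→[0,1] by s(y)=sup{z∈[0,1] : t(z)+a/2<y} (the pseudo-inverse of the increasing function t+a/2). Then the function G_{t,s}:[0,1]²→[0,1] defined by G_{t,s}(x,y)=s(t(x)+t(y)) is a positive continuous t-conorm. -/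
open unitInterval ENNReal

theorem stmt16 (a : ℝ≥0∞) (ha : a ≠ ⊤)
    (t : I → ℝ≥0∞) (htc : Continuous t) (hts : StrictMono t)
    (h1 : ∀ x : I, t x = ⊤ ↔ x = 1)
    (h2 : ∀ x : I, t x = a / 2 ↔ x = 0)
    (s : ℝ≥0∞ → I)
    (hs : ∀ y : ℝ≥0∞, (s y : ℝ) = sSup (Subtype.val '' {z : I | t z + a / 2 < y})) :
    IsTConorm (fun x y => s (t x + t y)) ∧
    (Continuous fun p : I × I => s (t p.1 + t p.2)) ∧
    (∀ x y : I, s (t x + t y) = 1 → x = 1 ∨ y = 1) := by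
  -- basic facts
  have hc : a / 2 ≠ ⊤ := (ENNReal.div_lt_top ha (by norm_num)).ne
  have ht0 : t 0 = a / 2 := (h2 0).mpr rfl
  have ht1 : t 1 = ⊤ := (h1 1).mpr rfl
  have htlb : ∀ x : I, a / 2 ≤ t x := fun x => ht0 ▸ hts.monotone (unitInterval.nonneg' : (0:I) ≤ x)
  have hsurj : ∀ w : ℝ≥0∞, a / 2 ≤ w → ∃ x : I, t x = w := by
    intro w hw
    exact intermediate_value_univ (0 : I) 1 htc ⟨ht0 ▸ hw, ht1 ▸ le_top⟩
  have himg : ∀ c : I, 0 < c → Subtype.val '' {z : I | z < c} = Set.Ico (0 : ℝ) (c : ℝ) := by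
    intro c hcpos
    ext r
    constructor
    · rintro ⟨z, hz, rfl⟩
      exact ⟨z.2.1, hz⟩
    · rintro ⟨h0, h1'⟩
      exact ⟨⟨r, h0, le_trans h1'.le c.2.2⟩, h1', rfl⟩
  have halow : ∀ x y : I, a ≤ t x + t y := by
    intro x y
    calc a = a / 2 + a / 2 := (ENNReal.add_halves a).symm
    _ ≤ t x + t y := add_le_add (htlb x) (htlb y)
  -- key lemma
  have hkey : ∀ y : ℝ≥0∞, t (s y) + a / 2 = max y a := by
    intro y
    rcases le_or_gt y a with hy | hy
    · have hempty : {z : I | t z + a / 2 < y} = ∅ := by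
        ext z
        simp only [Set.mem_setOf_eq, Set.mem_empty_iff_false, iff_false, not_lt]
        calc y ≤ a := hy
        _ = a / 2 + a / 2 := (ENNReal.add_halves a).symm
        _ ≤ t z + a / 2 := add_le_add_left (htlb z) _
      have : (s y : ℝ) = 0 := by rw [hs, hempty]; simp [Real.sSup_empty]
      have hsy : s y = 0 := Subtype.ext this
      rw [hsy, ht0, ENNReal.add_halves, max_eq_right hy]
    · rcases eq_or_ne y ⊤ with rfl | hytop
      · have hset : {z : I | t z + a / 2 < ⊤} = {z : I | z < 1} := by
          ext z
          simp only [Set.mem_setOf_eq]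
          rw [lt_top_iff_ne_top]
          constructor
          · intro h
            have hzt : t z ≠ ⊤ := fun hz => h (by simp [hz])
            exact lt_of_le_of_ne (unitInterval.le_one' : z ≤ 1) (fun hz1 => hzt ((h1 z).mpr hz1))
          · intro hz
            have : t z ≠ ⊤ := fun hzt => hz.ne ((h1 z).mp hzt)
            exact ENNReal.add_ne_top.mpr ⟨this, hc⟩
        have : (s ⊤ : ℝ) = 1 := by
          rw [hs, hset, himg 1 (by norm_num)]
          simp [csSup_Ico (by norm_num : (0:ℝ) < 1)]
        have hsy : s ⊤ = 1 := Subtype.ext this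
        rw [hsy, ht1, max_eq_left le_top]
        simp
      · obtain ⟨x0, hx0⟩ := hsurj (y - a / 2) ((ENNReal.cancel_of_ne hc).le_tsub_of_add_le_right (by rw [ENNReal.add_halves]; exact hy.le))
        have hx0y : t x0 + a / 2 = y :=
          hx0 ▸ tsub_add_cancel_of_le (le_trans (by calc a/2 ≤ a/2 + a/2 := le_self_add
                                                      _ = a := ENNReal.add_halves a) hy.le)
        have hx0pos : 0 < x0 := by
          rcases eq_or_lt_of_le (unitInterval.nonneg' : (0:I) ≤ x0) with h | h
          · exfalso
            rw [← h, ht0, ENNReal.add_halves] at hx0y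
            exact hy.ne' hx0y.symm
          · exact h
        have hset : {z : I | t z + a / 2 < y} = {z : I | z < x0} := by
          ext z
          simp only [Set.mem_setOf_eq]
          rw [← hx0y, ENNReal.add_lt_add_iff_right hc, hts.lt_iff_lt]
        have : (s y : ℝ) = (x0 : ℝ) := by
          rw [hs, hset, himg x0 hx0pos]
          exact csSup_Ico (by exact_mod_cast hx0pos)
        have hsy : s y = x0 := Subtype.ext this
        rw [hsy, hx0y, max_eq_left hy.le]
  have hts_eq : ∀ w : ℝ≥0∞, a ≤ w → t (s w) + a / 2 = w := by
    intro w hw; rw [hkey, max_eq_left hw]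
  -- neutral element
  have hneut : ∀ x : I, s (t x + a / 2) = x := by
    intro x
    apply hts.injective
    have h := hts_eq (t x + a / 2) (by
      calc a = a / 2 + a / 2 := (ENNReal.add_halves a).symm
      _ ≤ t x + a / 2 := add_le_add_left (htlb x) _)
    exact (ENNReal.add_left_inj hc).mp h
  -- monotonicity of s
  have hmono_s : Monotone s := by
    intro y y' hy
    have hb : BddAbove (Subtype.val '' {z : I | t z + a / 2 < y'}) := by
      refine ⟨1, ?_⟩
      rintro r ⟨z, _, rfl⟩
      exact z.2.2
    have : (s y : ℝ) ≤ (s y' : ℝ) := by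
      rw [hs, hs]
      rcases Set.eq_empty_or_nonempty {z : I | t z + a / 2 < y} with he | hne
      · rw [he]
        rw [Set.image_empty, Real.sSup_empty]
        apply Real.sSup_nonneg
        rintro r ⟨z, _, rfl⟩
        exact z.2.1
      · exact csSup_le_csSup hb (hne.image _)
          (Set.image_mono (fun z hz => lt_of_lt_of_le hz hy))
    exact_mod_cast this
  -- continuity of s
  have hcont_s : Continuous s := by
    have hmem : ∀ y : ℝ≥0∞, max y a - a / 2 ∈ Set.Ici (a / 2) := fun y =>
      (ENNReal.cancel_of_ne hc).le_tsub_of_add_le_right (by rw [ENNReal.add_halves]; exact le_max_right y a)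
    let e : I ≃ Set.Ici (a / 2) := Equiv.ofBijective (fun x => ⟨t x, htlb x⟩)
      ⟨fun u v huv => hts.injective (congrArg Subtype.val huv),
       fun w => (hsurj w w.2).imp (fun x hx => Subtype.ext hx)⟩
    have hec : Continuous e := Continuous.subtype_mk htc _
    let h := hec.homeoOfEquivCompactToT2
    have hrw : s = fun y => h.symm ⟨max y a - a / 2, hmem y⟩ := by
      funext y
      apply hts.injective
      have h1' : t (h.symm ⟨max y a - a / 2, hmem y⟩) = max y a - a / 2 :=
        congrArg Subtype.val (h.apply_symm_apply ⟨max y a - a / 2, hmem y⟩)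
      rw [h1']
      exact ENNReal.eq_sub_of_add_eq hc (hkey y)
    rw [hrw]
    exact h.symm.continuous.comp (Continuous.subtype_mk
      ((ENNReal.continuous_sub_right (a / 2)).comp (continuous_id.max continuous_const)) _)
  refine ⟨⟨fun x y => by show s (t x + t y) = s (t y + t x); rw [add_comm], ?_, ?_, ?_, ?_⟩, ?_, ?_⟩
  · -- associativity
    intro x y z
    apply hts.injective
    have e1 : t (s (t x + t y)) + a / 2 = t x + t y := hts_eq _ (halow x y)
    have e2 : t (s (t y + t z)) + a / 2 = t y + t z := hts_eq _ (halow y z)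
    have e3 : t (s (t (s (t x + t y)) + t z)) + a / 2 = t (s (t x + t y)) + t z := by
      apply hts_eq
      calc a = a / 2 + a / 2 := (ENNReal.add_halves a).symm
      _ ≤ t (s (t x + t y)) + t z := add_le_add (htlb _) (htlb _)
    have e4 : t (s (t x + t (s (t y + t z)))) + a / 2 = t x + t (s (t y + t z)) := by
      apply hts_eq
      calc a = a / 2 + a / 2 := (ENNReal.add_halves a).symm
      _ ≤ t x + t (s (t y + t z)) := add_le_add (htlb _) (htlb _)
    apply (ENNReal.add_left_inj hc).mp
    apply (ENNReal.add_left_inj hc).mp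
    calc t (s (t (s (t x + t y)) + t z)) + a / 2 + a / 2
        = t (s (t x + t y)) + t z + a / 2 := by rw [e3]
      _ = (t (s (t x + t y)) + a / 2) + t z := by ring
      _ = t x + t y + t z := by rw [e1]
      _ = t x + (t y + t z) := by ring
      _ = t x + (t (s (t y + t z)) + a / 2) := by rw [e2]
      _ = (t x + t (s (t y + t z))) + a / 2 := by ring
      _ = t (s (t x + t (s (t y + t z)))) + a / 2 + a / 2 := by rw [e4]
  · intro y x1 x2 hx
    exact hmono_s (add_le_add_left (hts.monotone hx) _)
  · intro x y1 y2 hy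
    exact hmono_s (add_le_add_right (hts.monotone hy) _)
  · intro x
    show s (t x + t 0) = x
    rw [ht0]
    exact hneut x
  · exact hcont_s.comp ((htc.comp continuous_fst).add (htc.comp continuous_snd))
  · intro x y hxy
    by_contra hcon
    push_neg at hcon
    have htx : t x ≠ ⊤ := fun h => hcon.1 ((h1 x).mp h)
    have hty : t y ≠ ⊤ := fun h => hcon.2 ((h1 y).mp h)
    have h := hkey (t x + t y)
    rw [hxy, ht1] at h
    have : max (t x + t y) a ≠ ⊤ := by
      simp [ENNReal.add_ne_top, htx, hty, ha, max_lt_iff, lt_top_iff_ne_top]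
    exact this (h ▸ by simp)
end

section
/- Fix a∈[0,∞). Let t:[0,1]→[0,∞] and s:[0,∞]→[0,1] be continuous and increasing functions such that t(x)=a/2 if and only if x=0, and suppose that the function G_{t,s}:[0,1]²→[0,1] defined by G_{t,s}(x,y)=s(t(x)+t(y)) is a grouping function having 0 as neutral element (G_{t,s}(x,0)=x for every x∈[0,1]). Then G_{t,s} is associative: G_{t,s}(G_{t,s}(x,y),z)=G_{t,s}(x,G_{t,s}(y,z)) for all x,y,z∈[0,1]. -/
open unitInterval ENNReal

theorem stmt17 (a : ℝ≥0∞) (ha : a ≠ ⊤)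
    (t : I → ℝ≥0∞) (s : ℝ≥0∞ → I)
    (htc : Continuous t) (hti : Monotone t)
    (hsc : Continuous s) (hsi : Monotone s)
    (h2 : ∀ x : I, t x = a / 2 ↔ x = 0)
    (hG : IsGrouping fun x y => s (t x + t y))
    (hneutral : ∀ x : I, s (t x + t 0) = x) :
    ∀ x y z : I, s (t (s (t x + t y)) + t z) = s (t x + t (s (t y + t z))) := by
  obtain ⟨hGc, hG0, hG1, hGm1, hGm2, hGcont⟩ := hG
  have hc : a / 2 ≠ ⊤ := (ENNReal.div_lt_top ha (by norm_num)).ne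
  have ht0 : t 0 = a / 2 := (h2 0).mpr rfl
  have hcle : ∀ x : I, a / 2 ≤ t x := fun x => ht0 ▸ hti nonneg'
  have ht1 : t 1 = ⊤ := by
    by_contra hM
    rcases eq_or_lt_of_le (hcle 1) with hEq | hlt
    · have h10 : (1 : I) = 0 := (h2 1).mp hEq.symm
      exact one_ne_zero (congrArg Subtype.val h10)
    · set M := t 1 with hMdef
      set u := (M + a / 2) / 2 with hudef
      have huu : u + u = M + a / 2 := ENNReal.add_halves _
      have hcu : a / 2 < u := by
        by_contra hle
        push_neg at hle
        have h1 : u + u ≤ a / 2 + a / 2 := add_le_add hle hle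
        rw [huu] at h1
        have h3 : a / 2 + a / 2 < M + a / 2 := ENNReal.add_lt_add_right hc hlt
        exact absurd (lt_of_le_of_lt h1 h3) (lt_irrefl _)
      have huM : u < M := by
        by_contra hle
        push_neg at hle
        have h1 : M + M ≤ u + u := add_le_add hle hle
        rw [huu] at h1
        have h3 : M + a / 2 < M + M := by
          rw [add_comm M (a / 2), add_comm M M]
          exact ENNReal.add_lt_add_right hM hlt
        exact absurd (lt_of_le_of_lt h1 h3) (lt_irrefl _)
      obtain ⟨x, hx⟩ : u ∈ Set.range t := by
        apply intermediate_value_univ 0 1 htc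
        exact ⟨ht0 ▸ hcu.le, huM.le⟩
      have hx1 : x ≠ 1 := by
        intro h
        rw [h] at hx
        exact huM.ne' hx
      have hsum : t x + t x = t 1 + t 0 := by
        rw [hx, ht0, ← hMdef, huu]
      have hone : s (t x + t x) = 1 := by rw [hsum]; exact hneutral 1
      rcases (hG1 x x).mp hone with h | h <;> exact hx1 h
  have key : ∀ x y : I, t (s (t x + t y)) = t x + t y - a / 2 := by
    intro x y
    have h1 : a / 2 + a / 2 ≤ t x + t y := add_le_add (hcle x) (hcle y)
    have h2' : a / 2 ≤ t x + t y - a / 2 := ENNReal.le_sub_of_add_le_left hc h1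
    obtain ⟨u, hu⟩ : t x + t y - a / 2 ∈ Set.range t := by
      apply intermediate_value_univ 0 1 htc
      exact ⟨ht0 ▸ h2', ht1 ▸ le_top⟩
    have hle : a / 2 ≤ t x + t y := le_trans le_self_add h1
    have heq : t u + t 0 = t x + t y := by
      rw [hu, ht0, tsub_add_cancel_of_le hle]
    have hsu : s (t x + t y) = u := by rw [← heq]; exact hneutral u
    rw [hsu, hu]
  intro x y z
  rw [key x y, key y z]
  obtain ⟨px, hpx⟩ := le_iff_exists_add.mp (hcle x)
  obtain ⟨py, hpy⟩ := le_iff_exists_add.mp (hcle y)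
  obtain ⟨pz, hpz⟩ := le_iff_exists_add.mp (hcle z)
  congr 1
  rw [hpx, hpy, hpz]
  have e1 : a / 2 + px + (a / 2 + py) - a / 2 = px + (a / 2 + py) := by
    rw [add_assoc, ENNReal.add_sub_cancel_left hc]
  have e2 : a / 2 + py + (a / 2 + pz) - a / 2 = py + (a / 2 + pz) := by
    rw [add_assoc, ENNReal.add_sub_cancel_left hc]
  rw [e1, e2]
  ring
end

section
/- Fix a∈[0,∞). Let t:[0,1]→[0,∞] and s:[0,∞]→[0,1] be continuous and increasing functions such that t(x)=a/2 if and only if x=0, and suppose that the function G_{t,s}:[0,1]²→[0,1] defined by G_{t,s}(x,y)=s(t(x)+t(y)) is a grouping function. Then the following three statements are equivalent: (1) G_{t,s} is a t-conorm; (2) 0 is a neutral element of G_{t,s} (G_{t,s}(x,0)=x for every x∈[0,1]); (3) s(t(x)+a/2)=x for every x∈[0,1]. -/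
open unitInterval ENNReal

theorem stmt18 (a : ℝ≥0∞) (ha : a ≠ ⊤)
    (t : I → ℝ≥0∞) (s : ℝ≥0∞ → I)
    (htc : Continuous t) (hti : Monotone t)
    (hsc : Continuous s) (hsi : Monotone s)
    (h2 : ∀ x : I, t x = a / 2 ↔ x = 0)
    (hG : IsGrouping fun x y => s (t x + t y)) :
    (IsTConorm (fun x y => s (t x + t y)) ↔ ∀ x : I, s (t x + t 0) = x) ∧
    ((∀ x : I, s (t x + t 0) = x) ↔ ∀ x : I, s (t x + a / 2) = x) := by
  have ht0 : t 0 = a / 2 := (h2 0).mpr rfl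
  have hle : ∀ x : I, t 0 ≤ t x := fun x => hti (by exact x.2.1)
  refine ⟨⟨fun h => h.2.2.2.2, fun N => ?_⟩, ?_⟩
  · -- build IsTConorm from neutrality
    have hle1 : ∀ u : I, u ≤ 1 := fun u => Subtype.coe_le_coe.mp u.2.2
    have hN1 : s (t 1 + t 0) = 1 := N 1
    have hD : ∀ u, t 1 + t 0 ≤ u → s u = 1 := fun u hu =>
      le_antisymm (hle1 _) (hN1 ▸ hsi hu)
    have hC : ∀ v, t 0 ≤ v → v ≤ t 1 → t (s (v + t 0)) = v := by
      intro v h1 h2'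
      obtain ⟨x, hx⟩ : v ∈ Set.range t := intermediate_value_univ 0 1 htc ⟨h1, h2'⟩
      rw [← hx, N x, hx]
    have hE : ∀ v w, t 0 ≤ v → t 0 ≤ w → s (t (s (v + t 0)) + w) = s (v + w) := by
      intro v w hv hw
      rcases le_total v (t 1) with h | h
      · rw [hC v hv h]
      · have h1 : s (v + t 0) = 1 := hD _ (add_le_add_left h _)
        rw [h1, hD _ (add_le_add_right hw _), hD _ (add_le_add h hw)]
    have key : ∀ p q r : I, s (t (s (t p + t q)) + t r)
        = s (t p + (t q - t 0) + t r) := by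
      intro p q r
      have hq : t q - t 0 + t 0 = t q := tsub_add_cancel_of_le (hle q)
      have hv : t 0 ≤ t p + (t q - t 0) := le_trans (hle p) le_self_add
      have := hE (t p + (t q - t 0)) (t r) hv (hle r)
      rwa [add_assoc, hq] at this
    refine ⟨fun x y => by show s (t x + t y) = s (t y + t x); rw [add_comm], ?_, hG.2.2.2.1, hG.2.2.2.2.1, N⟩
    intro x y z
    show s (t (s (t x + t y)) + t z) = s (t x + t (s (t y + t z)))
    rw [key x y z, add_comm (t x) (t (s (t y + t z))), add_comm (t y) (t z),
      key z y x]
    congr 1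
    ring
  · constructor <;> intro h x <;> [rw [← ht0]; rw [ht0]] <;> exact h x
end

section
/- Fix a∈[0,∞). Let t:[0,1]→[0,∞] be a continuous and increasing function that is NOT strictly increasing, and let s:[0,∞]→[0,1] be a continuous and increasing function. Suppose that the function G_{t,s}:[0,1]²→[0,1] defined by G_{t,s}(x,y)=s(t(x)+t(y)) is a grouping function satisfying at least one of the following two conditions: (1) t(x)=a/2 if and only if x=0; (2) s(x)=0 if and only if x∈[0,a]. Then there do NOT exist a positive continuous t-conorm S:[0,1]²→[0,1] and a pseudo automorphism F:[0,1]→[0,1] such that G_{t,s}(x,y)=F(S(x,y)) for all x,y∈[0,1]. -/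
open unitInterval ENNReal

theorem stmt19 (a : ℝ≥0∞) (ha : a ≠ ⊤)
    (t : I → ℝ≥0∞) (s : ℝ≥0∞ → I)
    (htc : Continuous t) (hti : Monotone t) (htns : ¬ StrictMono t)
    (hsc : Continuous s) (hsi : Monotone s)
    (hG : IsGrouping fun x y => s (t x + t y))
    (hcond : (∀ x : I, t x = a / 2 ↔ x = 0) ∨ (∀ x : ℝ≥0∞, s x = 0 ↔ x ≤ a)) :
    ¬ ∃ (S : I → I → I) (F : I → I),
        IsTConorm S ∧ (Continuous fun p : I × I => S p.1 p.2) ∧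
        (∀ x y : I, S x y = 1 → x = 1 ∨ y = 1) ∧
        IsPseudoAutomorphism F ∧ ∀ x y : I, s (t x + t y) = F (S x y) := by
  rintro ⟨S, F, ⟨hSc, hSa, hSm1, hSm2, hS0⟩, hScont, hSpos, ⟨hFm, hFc, hF1, hF0⟩, hrep⟩
  obtain ⟨hGc, hG0, hG1, hGm1, hGm2, hGcont⟩ := hG
  have hzero_ne_one : (0 : I) ≠ 1 := by
    intro h
    have := congrArg Subtype.val h
    norm_num at this
  have h00 : s (t 0 + t 0) = 0 := (hG0 0 0).mpr ⟨rfl, rfl⟩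
  have h11 : s (t 1 + t 1) = 1 := (hG1 1 1).mpr (Or.inl rfl)
  have h10 : s (t 1 + t 0) = 1 := (hG1 1 0).mpr (Or.inl rfl)
  have ht01 : t 0 < t 1 := by
    rcases lt_or_eq_of_le (hti (le_one' : (0:I) ≤ 1)) with h | h
    · exact h
    · exfalso
      rw [h] at h00
      rw [h00] at h11
      exact hzero_ne_one h11
  -- projIcc helper
  have hproj : ∀ z : I, Set.projIcc (0:ℝ) 1 zero_le_one (z:ℝ) = z := fun z =>
    Set.projIcc_val zero_le_one z
  -- IVT for t
  have hIVT : ∀ (e : I) (ρ : ℝ≥0∞), t e ≤ ρ → ρ ≤ t 1 → ∃ x : I, e ≤ x ∧ t x = ρ := by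
    intro e ρ h1 h2
    have hfc : Continuous fun r : ℝ => t (Set.projIcc 0 1 zero_le_one r) :=
      htc.comp (continuous_projIcc (h := zero_le_one))
    have hab : (e : ℝ) ≤ ((1:I) : ℝ) := Subtype.coe_le_coe.mpr le_one'
    have hmem : ρ ∈ Set.Icc ((fun r : ℝ => t (Set.projIcc 0 1 zero_le_one r)) (e:ℝ))
        ((fun r : ℝ => t (Set.projIcc 0 1 zero_le_one r)) ((1:I):ℝ)) := by
      simp only [hproj]
      exact ⟨h1, h2⟩
    obtain ⟨r, hr, hrρ⟩ := intermediate_value_Icc hab hfc.continuousOn hmem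
    refine ⟨Set.projIcc 0 1 zero_le_one r, ?_, hrρ⟩
    have := Set.monotone_projIcc zero_le_one hr.1
    rwa [hproj] at this
  -- S basics
  have hS1x : ∀ x : I, S 1 x = 1 := fun x =>
    le_antisymm le_one' (by
      calc (1:I) = S 1 0 := (hS0 1).symm
        _ ≤ S 1 x := hSm2 1 (nonneg' : (0:I) ≤ x))
  have hSx1 : ∀ x : I, S x 1 = 1 := fun x => (hSc x 1).trans (hS1x x)
  -- IVT for S in second variable
  have hSivt : ∀ w x : I, w ≤ x → ∃ z : I, S w z = x := by
    intro w x hwx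
    have hfc : Continuous fun r : ℝ => ((S w (Set.projIcc 0 1 zero_le_one r) : I) : ℝ) :=
      continuous_subtype_val.comp
        ((hScont.comp (continuous_const.prodMk continuous_id)).comp (continuous_projIcc (h := zero_le_one)))
    have hab : (((0:I)) : ℝ) ≤ ((1:I) : ℝ) := Subtype.coe_le_coe.mpr le_one'
    have hmem : (x : ℝ) ∈ Set.Icc
        ((fun r : ℝ => ((S w (Set.projIcc 0 1 zero_le_one r) : I) : ℝ)) (((0:I)):ℝ))
        ((fun r : ℝ => ((S w (Set.projIcc 0 1 zero_le_one r) : I) : ℝ)) (((1:I)):ℝ)) := by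
      simp only [hproj, hS0, hSx1]
      exact ⟨Subtype.coe_le_coe.mpr hwx, Subtype.coe_le_coe.mpr le_one'⟩
    obtain ⟨r, _, hrx⟩ := intermediate_value_Icc hab hfc.continuousOn hmem
    exact ⟨Set.projIcc 0 1 zero_le_one r, Subtype.ext hrx⟩
  -- t 1 = ⊤
  have ht1 : t 1 = ⊤ := by
    by_contra htop
    set μ := (t 1 + t 0) / 2 with hμ
    have hμ1 : t 0 ≤ μ := by
      have h2 : (t 0 + t 0)/2 ≤ (t 1 + t 0)/2 :=
        ENNReal.div_le_div_right (add_le_add_left ht01.le _) 2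
      calc t 0 = (t 0 + t 0)/2 := by rw [ENNReal.add_div, ENNReal.add_halves]
        _ ≤ μ := h2
    have hμ2 : μ ≤ t 1 := by
      have h2 : (t 1 + t 0)/2 ≤ (t 1 + t 1)/2 :=
        ENNReal.div_le_div_right (add_le_add_right ht01.le _) 2
      calc μ ≤ (t 1 + t 1)/2 := h2
        _ = t 1 := by rw [ENNReal.add_div, ENNReal.add_halves]
    obtain ⟨x, _, hxμ⟩ := hIVT 0 μ hμ1 hμ2
    have hμμ : μ + μ = t 1 + t 0 := ENNReal.add_halves _
    have hsx : s (t x + t x) = 1 := by rw [hxμ, hμμ]; exact h10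
    have hx1 : x = 1 := by rcases (hG1 x x).mp hsx with h | h <;> exact h
    rw [hx1] at hxμ
    have heq : t 1 + t 1 = t 1 + t 0 := by rw [← hxμ] at hμμ; exact hμμ
    have hlt : t 1 + t 0 < t 1 + t 1 := ENNReal.add_lt_add_left htop ht01
    rw [heq] at hlt
    exact lt_irrefl _ hlt
  have hstop : s ⊤ = 1 := by rw [ht1, top_add] at h11; exact h11
  have hFs : ∀ x : I, F x = s (t x + t 0) := by
    intro x
    have := hrep x 0
    rw [hS0] at this
    exact this.symm
  -- limits of monotone sequences in I
  have hlim : ∀ P : ℕ → I, Monotone P → ∃ e : I, Filter.Tendsto P Filter.atTop (nhds e)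
      ∧ ∀ n, P n ≤ e := by
    intro P hP
    have hmono : Monotone fun n => ((P n : ℝ)) := fun m n h => Subtype.coe_le_coe.mpr (hP h)
    have hbdd : BddAbove (Set.range fun n => ((P n : ℝ))) := by
      refine ⟨1, ?_⟩
      rintro r ⟨n, rfl⟩
      exact (P n).2.2
    have ht := tendsto_atTop_ciSup hmono hbdd
    have hL0 : (0:ℝ) ≤ ⨆ n, ((P n : ℝ)) := le_trans (P 0).2.1 (le_ciSup hbdd 0)
    have hL1 : (⨆ n, ((P n : ℝ))) ≤ 1 := ciSup_le fun n => (P n).2.2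
    refine ⟨⟨⨆ n, ((P n : ℝ)), hL0, hL1⟩, ?_, fun n => ?_⟩
    · exact tendsto_subtype_rng.mpr ht
    · exact Subtype.coe_le_coe.mp (le_ciSup hbdd n)
  by_cases hI : ∃ e : I, 0 < e ∧ e < 1 ∧ S e e = e
  · -- an interior idempotent exists: contradiction with the additive generator structure
    obtain ⟨e, he0, he1, hee⟩ := hI
    have hte_top : t e ≠ ⊤ := by
      intro hh
      have h1 : s (t e + t 0) = 1 := by rw [hh, top_add]; exact hstop
      rcases (hG1 e 0).mp h1 with h | h
      · exact he1.ne h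
      · exact hzero_ne_one h
    have ht0e : t 0 < t e := by
      rcases hcond with h | h
      · have h0 : t 0 = a / 2 := (h 0).mpr rfl
        refine lt_of_le_of_ne (hti (nonneg' : (0:I) ≤ e)) ?_
        intro hh
        rw [h0] at hh
        exact he0.ne' ((h e).mp hh.symm)
      · have h2a : t 0 + t 0 ≤ a := (h _).mp h00
        have hxa : ¬ (t e + t 0 ≤ a) := by
          intro hh
          have h3 : s (t e + t 0) = 0 := (h _).mpr hh
          exact he0.ne' ((hG0 e 0).mp h3).1
        have hlt : t 0 + t 0 < t e + t 0 := lt_of_le_of_lt h2a (not_le.mp hxa)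
        by_contra hle
        push_neg at hle
        exact absurd (add_le_add_left hle (t 0)) (not_le.mpr hlt)
    -- idempotents act as maximum
    have hmax : ∀ x : I, e ≤ x → S x e = x := by
      intro x hx
      obtain ⟨z, hz⟩ := hSivt e x hx
      calc S x e = S (S e z) e := by rw [hz]
        _ = S (S z e) e := by rw [hSc e z]
        _ = S z (S e e) := hSa z e e
        _ = S z e := by rw [hee]
        _ = S e z := hSc z e
        _ = x := hz
    have hid : ∀ x : I, e ≤ x → s (t x + t e) = s (t x + t 0) := by
      intro x hx
      have h1 := hrep x e
      rw [hmax x hx] at h1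
      rw [h1, hFs x]
    set d := t e - t 0 with hd
    have hd0 : 0 < d := tsub_pos_iff_lt.mpr ht0e
    have h0d : t 0 + d = t e := add_tsub_cancel_of_le ht0e.le
    have hkey : ∀ n : ℕ, s ((t e + n • d) + t e) = s (t e + t 0) := by
      intro n
      induction n with
      | zero => simpa using hid e le_rfl
      | succ n ih =>
        obtain ⟨x, hex, hx⟩ := hIVT e (t e + (n+1) • d) le_self_add (ht1 ▸ le_top)
        have h2 := hid x hex
        rw [hx] at h2
        rw [h2]
        have harith : (t e + (n+1) • d) + t 0 = (t e + n • d) + t e := by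
          rw [succ_nsmul, ← h0d]
          abel
        rw [harith]
        exact ih
    have htop : Filter.Tendsto (fun n : ℕ => (t e + n • d) + t e) Filter.atTop (nhds ⊤) := by
      obtain ⟨c, hc0, hcd⟩ := ENNReal.lt_iff_exists_nnreal_btwn.mp hd0
      have hc0' : (0:NNReal) < c := ENNReal.coe_pos.mp hc0
      apply ENNReal.tendsto_nhds_top
      intro k
      obtain ⟨N, hN⟩ := exists_nat_gt ((k : NNReal) / c)
      rw [div_lt_iff₀ hc0'] at hN
      filter_upwards [Filter.eventually_ge_atTop N] with n hn
      have h1 : (k : NNReal) < n * c :=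
        lt_of_lt_of_le hN (mul_le_mul_left (Nat.cast_le.mpr hn) c)
      calc (k : ℝ≥0∞) = ((k : NNReal) : ℝ≥0∞) := by push_cast; rfl
        _ < (((n : NNReal) * c : NNReal) : ℝ≥0∞) := ENNReal.coe_lt_coe.mpr h1
        _ = (n : ℝ≥0∞) * (c : ℝ≥0∞) := by push_cast; rfl
        _ ≤ (n : ℝ≥0∞) * d := mul_le_mul_right hcd.le _
        _ = n • d := (nsmul_eq_mul _ _).symm
        _ ≤ (t e + n • d) + t e := le_trans le_add_self le_self_add
    have hconst : Filter.Tendsto (fun n : ℕ => s ((t e + n • d) + t e)) Filter.atTop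
        (nhds (s (t e + t 0))) := by
      simp only [hkey]
      exact tendsto_const_nhds
    have hfin : s (t e + t 0) = s ⊤ :=
      tendsto_nhds_unique hconst ((hsc.tendsto ⊤).comp htop)
    rw [hstop] at hfin
    rcases (hG1 e 0).mp hfin with h | h
    · exact he1.ne h
    · exact hzero_ne_one h
  · -- no interior idempotent
    obtain ⟨u, v, huv, htuv⟩ : ∃ u v : I, u < v ∧ t u = t v := by
      by_contra hcon
      push_neg at hcon
      apply htns
      intro x y hxy
      exact lt_of_le_of_ne (hti hxy.le) (hcon x y hxy)
    have hv1 : v < 1 := by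
      by_contra hcon
      have hv : v = 1 := le_antisymm le_one' (not_lt.mp hcon)
      have hsu : s (t u + t u) = 1 := by rw [htuv, hv]; exact h11
      rcases (hG1 u u).mp hsu with h | h <;>
        exact absurd (h ▸ huv) (not_lt.mpr (le_one' : v ≤ 1))
    obtain ⟨p, hp⟩ := hSivt u v huv.le
    have hp0 : 0 < p := by
      rcases eq_or_lt_of_le (nonneg' : (0:I) ≤ p) with h | h
      · exfalso
        rw [← h, hS0] at hp
        exact huv.ne hp
      · exact h
    let P : ℕ → I := fun n => Nat.rec p (fun _ q => S q p) n
    have hP0 : P 0 = p := rfl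
    have hPs : ∀ n, P (n+1) = S (P n) p := fun n => rfl
    have hPmono : Monotone P := by
      apply monotone_nat_of_le_succ
      intro n
      rw [hPs]
      calc P n = S (P n) 0 := (hS0 _).symm
        _ ≤ S (P n) p := hSm2 (P n) (nonneg' : (0:I) ≤ p)
    obtain ⟨e, he, hle⟩ := hlim P hPmono
    have hpe : p ≤ e := hP0 ▸ hle 0
    have hcomp : ∀ w : I, Filter.Tendsto (fun n => S w (P n)) Filter.atTop (nhds (S w e)) :=
      fun w => (hScont.tendsto (w, e)).comp (tendsto_const_nhds.prodMk_nhds he)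
    have hSep : S e p = e := by
      have h1 : Filter.Tendsto (fun n => S (P n) p) Filter.atTop (nhds (S e p)) :=
        (hScont.tendsto (e, p)).comp (he.prodMk_nhds tendsto_const_nhds)
      have h2 : Filter.Tendsto (fun n => S (P n) p) Filter.atTop (nhds e) := by
        have := he.comp (Filter.tendsto_add_atTop_nat 1)
        exact this
      exact tendsto_nhds_unique h1 h2
    have hSePn : ∀ n, S e (P n) = e := by
      intro n
      induction n with
      | zero => exact hSep
      | succ n ih =>
        calc S e (P (n+1)) = S e (S (P n) p) := by rw [hPs]
          _ = S (S e (P n)) p := (hSa e (P n) p).symm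
          _ = S e p := by rw [ih]
          _ = e := hSep
    have hSee : S e e = e := by
      have h2 : Filter.Tendsto (fun n => S e (P n)) Filter.atTop (nhds e) := by
        simp only [hSePn]
        exact tendsto_const_nhds
      exact tendsto_nhds_unique (hcomp e) h2
    have he1 : e = 1 := by
      by_contra hne
      exact hI ⟨e, lt_of_lt_of_le hp0 hpe, lt_of_le_of_ne le_one' hne, hSee⟩
    have hFn : ∀ n, F (S u (P n)) = F v := by
      intro n
      induction n with
      | zero => rw [hP0, hp]
      | succ n ih =>
        have hstep : S u (P (n+1)) = S v (P n) := by
          calc S u (P (n+1)) = S u (S (P n) p) := by rw [hPs]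
            _ = S u (S p (P n)) := by rw [hSc (P n) p]
            _ = S (S u p) (P n) := (hSa u p (P n)).symm
            _ = S v (P n) := by rw [hp]
        rw [hstep]
        have h1 : F (S v (P n)) = s (t v + t (P n)) := (hrep v (P n)).symm
        rw [h1, ← htuv, hrep u (P n)]
        exact ih
    have hl1 : Filter.Tendsto (fun n => F (S u (P n))) Filter.atTop (nhds (F (S u e))) :=
      (hFc.tendsto _).comp (hcomp u)
    have hl2 : Filter.Tendsto (fun n => F (S u (P n))) Filter.atTop (nhds (F v)) := by
      simp only [hFn]
      exact tendsto_const_nhds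
    have hFv : F (S u e) = F v := tendsto_nhds_unique hl1 hl2
    rw [he1, hSx1, (hF1 1).mpr rfl] at hFv
    exact hv1.ne ((hF1 v).mp hFv.symm)
end
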